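/- arXiv:math/0511734 — 12 statements merged into one kernel-verified Lean document; each statement's English description precedes it below -/
import Mathlib

section
/- Let Z be a positive definite n×n complex matrix with largest eigenvalue a and smallest eigenvalue b. Then for every unit vector h, ‖Zh‖ ≤ ((a+b)/(2√(ab))) · ⟨h, Zh⟩. -/
/-! On the spectrum `[b, a]` the polynomial `(a - x)(x - b)` is nonnegative, so by the functional
calculus the operator `(a - Z)(Z - b)` is positive; evaluated at `h` this reads
`‖Zh‖² + ab‖h‖² ≤ (a + b)⟨h, Zh⟩`. By AM-GM the left side is at least `2√(ab)‖Zh‖‖h‖`. -/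

open scoped ComplexOrder InnerProductSpace

lemma IsSelfAdjoint.sub_mul_sub_nonneg {A : Type*} [Ring A] [StarRing A] [PartialOrder A]
    [StarOrderedRing A] [TopologicalSpace A] [Algebra ℝ A]
    [ContinuousFunctionalCalculus ℝ A IsSelfAdjoint] [NonnegSpectrumClass ℝ A]
    {T : A} (hT : IsSelfAdjoint T) {a b : ℝ} (hspec : spectrum ℝ T ⊆ Set.Icc b a) :
    0 ≤ (algebraMap ℝ A a - T) * (T - algebraMap ℝ A b) := by
  have hcfc : (algebraMap ℝ A a - T) * (T - algebraMap ℝ A b) =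
      cfc (fun x => (a - x) * (x - b)) T := by
    rw [cfc_mul .., cfc_sub .., cfc_sub .., cfc_const .., cfc_const .., cfc_id' ..]
  rw [hcfc]
  exact cfc_nonneg fun x hx => mul_nonneg (sub_nonneg.2 (hspec hx).2) (sub_nonneg.2 (hspec hx).1)

namespace ContinuousLinearMap

variable {E : Type*} [NormedAddCommGroup E] [InnerProductSpace ℂ E] [CompleteSpace E]
  {T : E →L[ℂ] E} {a b : ℝ}

lemma norm_apply_sq_add_le_of_spectrum_subset (hT : IsSelfAdjoint T)
    (hspec : spectrum ℝ T ⊆ Set.Icc b a) (x : E) :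
    ‖T x‖ ^ 2 + a * b * ‖x‖ ^ 2 ≤ (a + b) * (⟪x, T x⟫_ℂ).re := by
  have hpos : 0 ≤
      (⟪x, ((algebraMap ℝ (E →L[ℂ] E) a - T) * (T - algebraMap ℝ (E →L[ℂ] E) b)) x⟫_ℂ).re :=
    ((nonneg_iff_isPositive _).1 (hT.sub_mul_sub_nonneg hspec)).re_inner_nonneg_right x
  have hTTx : (⟪x, T (T x)⟫_ℂ).re = ‖T x‖ ^ 2 := by
    rw [← hT.adjoint_eq, adjoint_inner_right, hT.adjoint_eq]
    exact inner_self_eq_norm_sq (𝕜 := ℂ) _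
  have hxx : (⟪x, x⟫_ℂ).re = ‖x‖ ^ 2 := inner_self_eq_norm_sq (𝕜 := ℂ) _
  have hexp : ((algebraMap ℝ (E →L[ℂ] E) a - T) * (T - algebraMap ℝ (E →L[ℂ] E) b)) x
      = ((a + b : ℝ) : ℂ) • T x - T (T x) - ((a * b : ℝ) : ℂ) • x := by
    simp only [Algebra.algebraMap_eq_smul_one, mul_apply_eq_comp, sub_apply, smul_apply,
      one_apply_eq_self, map_sub, map_smul_of_tower, Complex.ofReal_add, Complex.ofReal_mul]
    module
  rw [hexp, inner_sub_right, inner_sub_right, inner_smul_right, inner_smul_right, Complex.sub_re,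
    Complex.sub_re, Complex.re_ofReal_mul, Complex.re_ofReal_mul, hTTx, hxx] at hpos
  linarith

lemma norm_apply_mul_norm_le_of_spectrum_subset (hT : IsSelfAdjoint T)
    (hspec : spectrum ℝ T ⊆ Set.Icc b a) (hb : 0 < b) (hba : b ≤ a) (x : E) :
    ‖T x‖ * ‖x‖ ≤ (a + b) / (2 * √(a * b)) * (⟪x, T x⟫_ℂ).re := by
  have hs : 0 < √(a * b) := Real.sqrt_pos.2 (by nlinarith)
  have hs_sq : √(a * b) ^ 2 = a * b := Real.sq_sqrt (by nlinarith)
  have amgm : 2 * √(a * b) * (‖T x‖ * ‖x‖) ≤ ‖T x‖ ^ 2 + a * b * ‖x‖ ^ 2 := by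
    nlinarith [sq_nonneg (‖T x‖ - √(a * b) * ‖x‖)]
  rw [div_mul_eq_mul_div, le_div_iff₀ (by positivity)]
  linarith [norm_apply_sq_add_le_of_spectrum_subset hT hspec x]

end ContinuousLinearMap

lemma Matrix.spectrum_real_toEuclideanCLM {𝕜 n : Type*} [RCLike 𝕜] [Fintype n] [DecidableEq n]
    (A : Matrix n n 𝕜) : spectrum ℝ (Matrix.toEuclideanCLM (𝕜 := 𝕜) A) = spectrum ℝ A := by
  rw [← spectrum.preimage_algebraMap 𝕜, AlgEquiv.spectrum_eq, spectrum.preimage_algebraMap]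

theorem stmt_0_general (n : ℕ) (Z : Matrix (Fin n) (Fin n) ℂ) (hZ : Z.PosDef)
    (a b : ℝ)
    (ha : ∀ i, hZ.1.eigenvalues i ≤ a)
    (hb : ∀ i, b ≤ hZ.1.eigenvalues i) (hb' : ∃ i, hZ.1.eigenvalues i = b)
    (h : EuclideanSpace ℂ (Fin n)) (hh : ‖h‖ = 1) :
    ‖Matrix.toEuclideanCLM (𝕜 := ℂ) Z h‖ ≤
      (a + b) / (2 * Real.sqrt (a * b)) *
        (inner ℂ h (Matrix.toEuclideanCLM (𝕜 := ℂ) Z h) : ℂ).re := by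
  obtain ⟨i, rfl⟩ := hb'
  have hspec : spectrum ℝ (Matrix.toEuclideanCLM (𝕜 := ℂ) Z) ⊆ Set.Icc (hZ.1.eigenvalues i) a := by
    rw [Matrix.spectrum_real_toEuclideanCLM, hZ.1.spectrum_real_eq_range_eigenvalues]
    rintro _ ⟨j, rfl⟩
    exact ⟨hb j, ha j⟩
  simpa [hh] using ContinuousLinearMap.norm_apply_mul_norm_le_of_spectrum_subset
    (hZ.1.isSelfAdjoint.map _) hspec (hZ.eigenvalues_pos i) (ha i) h

theorem stmt_0 (n : ℕ) (Z : Matrix (Fin n) (Fin n) ℂ) (hZ : Z.PosDef)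
    (a b : ℝ)
    (ha : ∀ i, hZ.1.eigenvalues i ≤ a) (ha' : ∃ i, hZ.1.eigenvalues i = a)
    (hb : ∀ i, b ≤ hZ.1.eigenvalues i) (hb' : ∃ i, hZ.1.eigenvalues i = b)
    (h : EuclideanSpace ℂ (Fin n)) (hh : ‖h‖ = 1) :
    ‖Matrix.toEuclideanCLM (𝕜 := ℂ) Z h‖ ≤
      (a + b) / (2 * Real.sqrt (a * b)) *
        (inner ℂ h (Matrix.toEuclideanCLM (𝕜 := ℂ) Z h) : ℂ).re :=
  stmt_0_general n Z hZ a b ha hb hb' h hh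
end

section
/- For positive reals a ≥ b > 0, the function y ↦ √(a²y + b²(1−y)) / (a y + b(1−y)) on [0,1] attains its maximum value (a+b)/(2√(ab)) at y = b/(a+b). -/
theorem stmt_2 (a b : ℝ) (hb : 0 < b) (hab : b ≤ a) :
    IsMaxOn (fun y : ℝ => Real.sqrt (a ^ 2 * y + b ^ 2 * (1 - y)) / (a * y + b * (1 - y)))
        (Set.Icc 0 1) (b / (a + b)) ∧
      (fun y : ℝ => Real.sqrt (a ^ 2 * y + b ^ 2 * (1 - y)) / (a * y + b * (1 - y)))
          (b / (a + b)) = (a + b) / (2 * Real.sqrt (a * b)) := by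
  have ha : 0 < a := lt_of_lt_of_le hb hab
  have hs : Real.sqrt (a * b) ^ 2 = a * b := Real.sq_sqrt (by positivity)
  have hs0 : 0 < Real.sqrt (a * b) := Real.sqrt_pos.mpr (by positivity)
  have hab0 : 0 < a + b := by linarith
  have hval : (fun y : ℝ => Real.sqrt (a ^ 2 * y + b ^ 2 * (1 - y)) / (a * y + b * (1 - y)))
      (b / (a + b)) = (a + b) / (2 * Real.sqrt (a * b)) := by
    simp only
    have hN : a ^ 2 * (b / (a + b)) + b ^ 2 * (1 - b / (a + b)) = a * b := by
      field_simp; ring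
    have hD : a * (b / (a + b)) + b * (1 - b / (a + b)) = 2 * a * b / (a + b) := by
      field_simp; ring
    rw [hN, hD]
    rw [div_eq_div_iff (by positivity) (by positivity)]
    nlinarith [hs, hs0]
  refine ⟨?_, hval⟩
  intro y hy
  simp only [Set.mem_setOf_eq, hval]
  obtain ⟨hy0, hy1⟩ := hy
  have hD : 0 < a * y + b * (1 - y) := by nlinarith
  have hN : 0 ≤ a ^ 2 * y + b ^ 2 * (1 - y) := by nlinarith
  have hNs : Real.sqrt (a ^ 2 * y + b ^ 2 * (1 - y)) ^ 2 = a ^ 2 * y + b ^ 2 * (1 - y) :=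
    Real.sq_sqrt hN
  have hNs0 : 0 ≤ Real.sqrt (a ^ 2 * y + b ^ 2 * (1 - y)) := Real.sqrt_nonneg _
  rw [div_le_div_iff₀ hD (by positivity)]
  have key : 4 * (a * b) * (a ^ 2 * y + b ^ 2 * (1 - y)) ≤ ((a + b) * (a * y + b * (1 - y))) ^ 2 := by
    nlinarith [sq_nonneg (((a + b) * y - b) * (a - b))]
  nlinarith [key, hNs, hs, hNs0, hs0.le, mul_nonneg hNs0 hs0.le,
    mul_pos hab0 hD]
end

section
/- Let A, B be n×n complex matrices with AB positive semidefinite, and let Z be positive definite with largest eigenvalue a and smallest eigenvalue b. Then ‖ZAB‖₁ ≤ ((a+b)/(2√(ab))) · ‖BZA‖₁, where ‖·‖₁ is the trace norm. -/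
/-!
Let `S` be the positive square root of `Z`. Then `Z A B = S M S⁻¹` with `M = S A B S` positive
semidefinite and `tr M = tr (B Z A)`. Expanding `M = ∑ μₖ vₖ vₖᴴ` writes `Z A B` as a sum of the
rank-one maps `μₖ (S vₖ) (S⁻¹ vₖ)ᴴ`, so `‖Z A B‖₁ ≤ ∑ μₖ ‖S vₖ‖ ‖S⁻¹ vₖ‖`. For a unit vector `x`,
`‖S x‖² ‖S⁻¹ x‖² = ⟪x, Z x⟫ ⟪x, Z⁻¹ x⟫ ≤ (a + b)² / (4 a b)` by the Kantorovich inequality, hence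
`‖Z A B‖₁ ≤ (a + b) / (2 √(a b)) · tr M ≤ (a + b) / (2 √(a b)) · ‖B Z A‖₁`.
-/

open scoped ComplexOrder

/-- The trace norm of a matrix: the sum of its singular values, i.e. of the square roots of
the eigenvalues of `Xᴴ * X`. -/
noncomputable def traceNorm {n : ℕ} (X : Matrix (Fin n) (Fin n) ℂ) : ℝ :=
  ∑ i, Real.sqrt ((Matrix.posSemidef_conjTranspose_mul_self X).1.eigenvalues i)

open scoped InnerProductSpace Matrix
open RCLike

theorem four_mul_sum_mul_sum_inv_mul_le {ι : Type*} [Fintype ι] {a b : ℝ} (hb : 0 < b)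
    (hba : b ≤ a) {l c : ι → ℝ} (hl : ∀ i, l i ∈ Set.Icc b a) (hc : ∀ i, 0 ≤ c i) :
    4 * (a * b) * ((∑ i, l i * c i) * ∑ i, (l i)⁻¹ * c i) ≤ ((a + b) * ∑ i, c i) ^ 2 := by
  have hl0 i : 0 < l i := hb.trans_le (hl i).1
  set P := ∑ i, l i * c i
  set Q := ∑ i, (l i)⁻¹ * c i
  have hP : 0 ≤ P := Finset.sum_nonneg fun i _ => mul_nonneg (hl0 i).le (hc i)
  have hQ : 0 ≤ Q := Finset.sum_nonneg fun i _ => mul_nonneg (inv_nonneg.2 (hl0 i).le) (hc i)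
  -- termwise, `l + a b / l ≤ a + b` is `(a - l) (l - b) ≥ 0`
  have hsum : P + a * b * Q ≤ (a + b) * ∑ i, c i := by
    rw [Finset.mul_sum, Finset.mul_sum, ← Finset.sum_add_distrib]
    refine Finset.sum_le_sum fun i _ => ?_
    have key : 0 ≤ (a - l i) * (l i - b) / l i * c i :=
      mul_nonneg (div_nonneg (mul_nonneg (sub_nonneg.2 (hl i).2) (sub_nonneg.2 (hl i).1))
        (hl0 i).le) (hc i)
    have hid : (a - l i) * (l i - b) / l i * c i =
        (a + b) * c i - (l i * c i + a * b * ((l i)⁻¹ * c i)) := by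
      field_simp [(hl0 i).ne']
      ring
    linarith
  calc 4 * (a * b) * (P * Q) ≤ (P + a * b * Q) ^ 2 := by nlinarith [sq_nonneg (P - a * b * Q)]
    _ ≤ ((a + b) * ∑ i, c i) ^ 2 :=
      pow_le_pow_left₀ (add_nonneg hP (mul_nonneg (by nlinarith) hQ)) hsum 2

section

variable {𝕜 : Type*} [RCLike 𝕜]

theorem OrthonormalBasis.re_inner_apply_self_eq_sum {ι E : Type*} [Fintype ι]
    [NormedAddCommGroup E] [InnerProductSpace 𝕜 E] (e : OrthonormalBasis ι 𝕜 E) {T : E →L[𝕜] E}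
    {l : ι → ℝ} (hT : ∀ i, T (e i) = (l i : 𝕜) • e i) (x : E) :
    re ⟪x, T x⟫_𝕜 = ∑ i, l i * ‖⟪e i, x⟫_𝕜‖ ^ 2 := by
  have hTx : T x = ∑ i, ⟪e i, x⟫_𝕜 • (l i : 𝕜) • e i := by
    conv_lhs => rw [← e.sum_repr' x]
    simp only [map_sum, map_smul, hT]
  rw [hTx, inner_sum, map_sum]
  refine Finset.sum_congr rfl fun i _ => ?_
  rw [inner_smul_right, inner_smul_right, ← inner_conj_symm x, mul_left_comm, RCLike.mul_conj]
  norm_cast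

theorem OrthonormalBasis.norm_sum_inner_mul_inner_le {ι E : Type*} [Fintype ι]
    [NormedAddCommGroup E] [InnerProductSpace 𝕜 E] (u w : OrthonormalBasis ι 𝕜 E) (y z : E) :
    ‖∑ i, ⟪z, w i⟫_𝕜 * ⟪u i, y⟫_𝕜‖ ≤ ‖z‖ * ‖y‖ := by
  calc ‖∑ i, ⟪z, w i⟫_𝕜 * ⟪u i, y⟫_𝕜‖ ≤ ∑ i, ‖⟪z, w i⟫_𝕜‖ * ‖⟪u i, y⟫_𝕜‖ := by
        simpa only [norm_mul] using norm_sum_le Finset.univ fun i => ⟪z, w i⟫_𝕜 * ⟪u i, y⟫_𝕜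
    _ ≤ √(∑ i, ‖⟪z, w i⟫_𝕜‖ ^ 2) * √(∑ i, ‖⟪u i, y⟫_𝕜‖ ^ 2) :=
        Real.sum_mul_le_sqrt_mul_sqrt _ _ _
    _ = ‖z‖ * ‖y‖ := by
        rw [w.sum_sq_norm_inner_left, u.sum_sq_norm_inner_right, Real.sqrt_sq (norm_nonneg _),
          Real.sqrt_sq (norm_nonneg _)]

namespace Matrix

variable {m : Type*} [Fintype m] [DecidableEq m]

local notation "L" => toEuclideanCLM (𝕜 := 𝕜)

theorem toEuclideanCLM_conjTranspose (A : Matrix m m 𝕜) :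
    L Aᴴ = ContinuousLinearMap.adjoint (L A) := by
  rw [← star_eq_conjTranspose, map_star, ContinuousLinearMap.star_eq_adjoint]

theorem norm_toEuclideanCLM_apply_sq (A : Matrix m m 𝕜) (x : EuclideanSpace 𝕜 m) :
    ‖L A x‖ ^ 2 = re ⟪x, L (Aᴴ * A) x⟫_𝕜 := by
  rw [map_mul, toEuclideanCLM_conjTranspose]
  exact ContinuousLinearMap.apply_norm_sq_eq_inner_adjoint_right _ x

theorem trace_eq_sum_inner_toEuclideanCLM {ι : Type*} [Fintype ι] (A : Matrix m m 𝕜)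
    (b : OrthonormalBasis ι 𝕜 (EuclideanSpace 𝕜 m)) :
    A.trace = ∑ i, ⟪b i, L A (b i)⟫_𝕜 :=
  (trace_toLin_eq A (PiLp.basisFun 2 𝕜 m)).symm.trans (LinearMap.trace_eq_sum_inner _ b)

namespace IsHermitian

theorem toEuclideanCLM_eigenvectorBasis {A : Matrix m m 𝕜} (hA : A.IsHermitian) (i : m) :
    L A (hA.eigenvectorBasis i) = (hA.eigenvalues i : 𝕜) • hA.eigenvectorBasis i := by
  apply WithLp.ofLp_injective
  rw [ofLp_toEuclideanCLM, hA.mulVec_eigenvectorBasis, WithLp.ofLp_smul,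
    RCLike.real_smul_eq_coe_smul (K := 𝕜)]

theorem toEuclideanCLM_apply_eq_sum {A : Matrix m m 𝕜} (hA : A.IsHermitian)
    (x : EuclideanSpace 𝕜 m) :
    L A x = ∑ i, ⟪hA.eigenvectorBasis i, x⟫_𝕜 • (hA.eigenvalues i : 𝕜) • hA.eigenvectorBasis i := by
  conv_lhs => rw [← hA.eigenvectorBasis.sum_repr' x]
  simp only [map_sum, map_smul, hA.toEuclideanCLM_eigenvectorBasis]

end IsHermitian

theorem PosDef.toEuclideanCLM_inv_eigenvectorBasis {A : Matrix m m 𝕜} (hA : A.PosDef) (i : m) :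
    L A⁻¹ (hA.1.eigenvectorBasis i) =
      (hA.1.eigenvalues i : 𝕜)⁻¹ • hA.1.eigenvectorBasis i := by
  have hl : (hA.1.eigenvalues i : 𝕜) ≠ 0 := RCLike.ofReal_ne_zero.2 (hA.eigenvalues_pos i).ne'
  have h : (hA.1.eigenvalues i : 𝕜) • L A⁻¹ (hA.1.eigenvectorBasis i) =
      hA.1.eigenvectorBasis i := by
    rw [← map_smul, ← hA.1.toEuclideanCLM_eigenvectorBasis, ← mul_apply_eq_comp, ← map_mul,
      nonsing_inv_mul _ (isUnit_iff_isUnit_det _ |>.1 hA.isUnit), map_one, one_apply_eq_self]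
  exact (eq_inv_smul_iff₀ hl).2 h

theorem PosSemidef.exists_isHermitian_mul_self_eq
    {Z : Matrix m m 𝕜} (hZ : Z.PosSemidef) : ∃ S : Matrix m m 𝕜, S.IsHermitian ∧ S * S = Z := by
  open scoped MatrixOrder in
  exact ⟨CFC.sqrt Z, (nonneg_iff_posSemidef.1 (CFC.sqrt_nonneg Z)).isHermitian,
    CFC.sqrt_mul_sqrt_self Z hZ.nonneg⟩

theorem PosDef.norm_toEuclideanCLM_mul_norm_inv_le {Z S : Matrix m m 𝕜} (hZ : Z.PosDef)
    {a b : ℝ} (hb : 0 < b) (hba : b ≤ a) (hZab : ∀ i, hZ.1.eigenvalues i ∈ Set.Icc b a)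
    (hS : S.IsHermitian) (hSZ : S * S = Z) (x : EuclideanSpace 𝕜 m) :
    ‖L S x‖ * ‖L S⁻¹ x‖ ≤ (a + b) / (2 * √(a * b)) * ‖x‖ ^ 2 := by
  set e := hZ.1.eigenvectorBasis
  set l := hZ.1.eigenvalues
  have hSx : ‖L S x‖ ^ 2 = ∑ i, l i * ‖⟪e i, x⟫_𝕜‖ ^ 2 := by
    rw [norm_toEuclideanCLM_apply_sq, hS.eq, hSZ]
    exact e.re_inner_apply_self_eq_sum hZ.1.toEuclideanCLM_eigenvectorBasis x
  have hSinvx : ‖L S⁻¹ x‖ ^ 2 = ∑ i, (l i)⁻¹ * ‖⟪e i, x⟫_𝕜‖ ^ 2 := by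
    rw [norm_toEuclideanCLM_apply_sq, conjTranspose_nonsing_inv, hS.eq, ← mul_inv_rev, hSZ]
    refine e.re_inner_apply_self_eq_sum (l := fun i => (l i)⁻¹) (fun i => ?_) x
    rw [hZ.toEuclideanCLM_inv_eigenvectorBasis, RCLike.ofReal_inv]
  have hkant := four_mul_sum_mul_sum_inv_mul_le hb hba hZab fun i => sq_nonneg ‖⟪e i, x⟫_𝕜‖
  rw [← hSx, ← hSinvx, e.sum_sq_norm_inner_right] at hkant
  have ha : 0 < a := hb.trans_le hba
  have hsqrt : √(a * b) ^ 2 = a * b := Real.sq_sqrt (by positivity)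
  rw [← pow_le_pow_iff_left₀ (by positivity) (by positivity) two_ne_zero, div_mul_eq_mul_div,
    div_pow, le_div_iff₀ (by positivity)]
  calc (‖L S x‖ * ‖L S⁻¹ x‖) ^ 2 * (2 * √(a * b)) ^ 2
      = 4 * (a * b) * (‖L S x‖ ^ 2 * ‖L S⁻¹ x‖ ^ 2) := by rw [mul_pow, mul_pow, hsqrt]; ring
    _ ≤ ((a + b) * ‖x‖ ^ 2) ^ 2 := hkant

end Matrix

end

section TraceNorm

open Matrix

variable {n : ℕ}

local notation "L" => toEuclideanCLM (𝕜 := ℂ) (n := Fin n)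

theorem traceNorm_eq_sum_norm (X : Matrix (Fin n) (Fin n) ℂ) :
    traceNorm X = ∑ i, ‖L X ((posSemidef_conjTranspose_mul_self X).1.eigenvectorBasis i)‖ := by
  refine Finset.sum_congr rfl fun i _ => ?_
  set hXX := (posSemidef_conjTranspose_mul_self X).1
  rw [← Real.sqrt_sq (norm_nonneg (L X _)), norm_toEuclideanCLM_apply_sq,
    hXX.toEuclideanCLM_eigenvectorBasis, inner_smul_right, inner_self_eq_norm_sq_to_K,
    hXX.eigenvectorBasis.orthonormal.1 i]
  simp

theorem re_trace_le_traceNorm (Y : Matrix (Fin n) (Fin n) ℂ) : re Y.trace ≤ traceNorm Y := by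
  set w := (posSemidef_conjTranspose_mul_self Y).1.eigenvectorBasis
  rw [trace_eq_sum_inner_toEuclideanCLM Y w, traceNorm_eq_sum_norm, map_sum]
  gcongr with i
  calc re ⟪w i, L Y (w i)⟫_ℂ ≤ ‖⟪w i, L Y (w i)⟫_ℂ‖ := re_le_norm _
    _ ≤ ‖w i‖ * ‖L Y (w i)‖ := norm_inner_le_norm _ _
    _ = ‖L Y (w i)‖ := by rw [w.orthonormal.1 i, one_mul]

theorem traceNorm_le_sum_norm_mul_norm {ι : Type*} [Fintype ι] (X : Matrix (Fin n) (Fin n) ℂ)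
    (y z : ι → EuclideanSpace ℂ (Fin n)) (hX : ∀ v, L X v = ∑ k, ⟪z k, v⟫_ℂ • y k) :
    traceNorm X ≤ ∑ k, ‖y k‖ * ‖z k‖ := by
  set hXX := (posSemidef_conjTranspose_mul_self X).1
  set w := hXX.eigenvectorBasis
  set f := fun i => L X (w i)
  have hf : Pairwise fun i j => ⟪f i, f j⟫_ℂ = 0 := by
    intro i j hij
    rw [← ContinuousLinearMap.adjoint_inner_right, ← toEuclideanCLM_conjTranspose,
      ← mul_apply_eq_comp, ← map_mul, hXX.toEuclideanCLM_eigenvectorBasis, inner_smul_right,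
      w.orthonormal.2 hij, mul_zero]
  -- polar decomposition: `u` is an orthonormal basis with `u i = f i / ‖f i‖` whenever `f i ≠ 0`
  set u := InnerProductSpace.gramSchmidtOrthonormalBasis finrank_euclideanSpace f
  have hu i : ⟪u i, f i⟫_ℂ = ‖f i‖ := by
    by_cases h0 : f i = 0
    · simp [h0]
    · rw [InnerProductSpace.gramSchmidtOrthonormalBasis_apply_of_orthogonal _ hf h0,
        inner_smul_left, inner_self_eq_norm_sq_to_K, map_inv₀, RCLike.conj_ofReal, sq]
      exact inv_mul_cancel_left₀ (by simpa using h0) _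
  calc traceNorm X = ∑ i, ‖f i‖ := traceNorm_eq_sum_norm X
    _ = re (∑ i, ⟪u i, f i⟫_ℂ) := by simp [hu]
    _ = re (∑ k, ∑ i, ⟪z k, w i⟫_ℂ * ⟪u i, y k⟫_ℂ) := by
        simp only [f, hX, inner_sum, inner_smul_right]
        rw [Finset.sum_comm]
    _ ≤ ∑ k, ‖∑ i, ⟪z k, w i⟫_ℂ * ⟪u i, y k⟫_ℂ‖ := by
        rw [map_sum]
        gcongr
        exact re_le_norm _
    _ ≤ ∑ k, ‖y k‖ * ‖z k‖ := by
        gcongr with k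
        rw [mul_comm]
        exact u.norm_sum_inner_mul_inner_le w _ _

theorem traceNorm_mul_mul_le (S M R : Matrix (Fin n) (Fin n) ℂ) (hM : M.IsHermitian) :
    traceNorm (S * M * R) ≤ ∑ k, |hM.eigenvalues k| *
      (‖L S (hM.eigenvectorBasis k)‖ * ‖L Rᴴ (hM.eigenvectorBasis k)‖) := by
  set v := hM.eigenvectorBasis
  calc traceNorm (S * M * R)
      ≤ ∑ k, ‖(hM.eigenvalues k : ℂ) • L S (v k)‖ * ‖L Rᴴ (v k)‖ := by
        refine traceNorm_le_sum_norm_mul_norm _ _ _ fun x => ?_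
        rw [map_mul, map_mul, mul_apply_eq_comp, mul_apply_eq_comp, hM.toEuclideanCLM_apply_eq_sum,
          map_sum]
        refine Finset.sum_congr rfl fun k _ => ?_
        rw [toEuclideanCLM_conjTranspose, ContinuousLinearMap.adjoint_inner_left, map_smul,
          map_smul]
        rfl
    _ = _ := by simp only [norm_smul, Complex.norm_real, Real.norm_eq_abs, mul_assoc]

theorem traceNorm_mul_mul_inv_le {S M : Matrix (Fin n) (Fin n) ℂ} (hM : M.PosSemidef)
    (hS : S.IsHermitian) {K : ℝ} (hK : ∀ x, ‖L S x‖ * ‖L S⁻¹ x‖ ≤ K * ‖x‖ ^ 2) :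
    traceNorm (S * M * S⁻¹) ≤ K * re M.trace := by
  set v := hM.1.eigenvectorBasis
  have hSinv : S⁻¹ᴴ = S⁻¹ := by rw [conjTranspose_nonsing_inv, hS.eq]
  calc traceNorm (S * M * S⁻¹)
      ≤ ∑ k, |hM.1.eigenvalues k| * (‖L S (v k)‖ * ‖L S⁻¹ (v k)‖) := by
        simpa only [hSinv] using traceNorm_mul_mul_le S M S⁻¹ hM.1
    _ ≤ ∑ k, hM.1.eigenvalues k * K := by
        refine Finset.sum_le_sum fun k _ => ?_
        rw [abs_of_nonneg (hM.eigenvalues_nonneg k)]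
        refine mul_le_mul_of_nonneg_left ?_ (hM.eigenvalues_nonneg k)
        simpa [v.orthonormal.1 k] using hK (v k)
    _ = K * re M.trace := by
        rw [hM.1.trace_eq_sum_eigenvalues, ← Finset.sum_mul, mul_comm]
        simp

end TraceNorm

theorem stmt_3_general (n : ℕ) (A B Z : Matrix (Fin n) (Fin n) ℂ)
    (hAB : (A * B).PosSemidef) (hZ : Z.PosDef) (a b : ℝ)
    (ha : ∀ i, hZ.1.eigenvalues i ≤ a)
    (hb : ∀ i, b ≤ hZ.1.eigenvalues i) (hb' : ∃ i, hZ.1.eigenvalues i = b) :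
    traceNorm (Z * A * B) ≤ (a + b) / (2 * Real.sqrt (a * b)) * traceNorm (B * Z * A) := by
  obtain ⟨i₀, hi₀⟩ := hb'
  have hb0 : 0 < b := hi₀ ▸ hZ.eigenvalues_pos i₀
  have hba : b ≤ a := hi₀ ▸ ha i₀
  obtain ⟨S, hS, hSZ⟩ := hZ.posSemidef.exists_isHermitian_mul_self_eq
  have hSinv : S * S⁻¹ = 1 :=
    Matrix.mul_nonsing_inv S <| (Matrix.isUnit_iff_isUnit_det S).1 <|
      isUnit_of_mul_isUnit_left (hSZ ▸ hZ.isUnit)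
  set M := S * (A * B) * S
  have hM : M.PosSemidef := by simpa only [hS.eq] using hAB.mul_mul_conjTranspose_same S
  have hZAB : Z * A * B = S * M * S⁻¹ := by
    simp only [M, ← hSZ, Matrix.mul_assoc, hSinv, Matrix.mul_one]
  have htrace : M.trace = (B * Z * A).trace := by
    rw [show M = S * (A * B) * S from rfl, Matrix.trace_mul_cycle, hSZ, ← Matrix.mul_assoc,
      Matrix.trace_mul_cycle]
  rw [hZAB]
  calc traceNorm (S * M * S⁻¹)
      ≤ (a + b) / (2 * √(a * b)) * re M.trace :=
        traceNorm_mul_mul_inv_le hM hS fun x =>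
          hZ.norm_toEuclideanCLM_mul_norm_inv_le hb0 hba (fun i => ⟨hb i, ha i⟩) hS hSZ x
    _ ≤ (a + b) / (2 * √(a * b)) * traceNorm (B * Z * A) := by
        rw [htrace]
        exact mul_le_mul_of_nonneg_left (re_trace_le_traceNorm _)
          (div_nonneg (by linarith) (by positivity))

theorem stmt_3 (n : ℕ) (A B Z : Matrix (Fin n) (Fin n) ℂ)
    (hAB : (A * B).PosSemidef) (hZ : Z.PosDef) (a b : ℝ)
    (ha : ∀ i, hZ.1.eigenvalues i ≤ a) (ha' : ∃ i, hZ.1.eigenvalues i = a)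
    (hb : ∀ i, b ≤ hZ.1.eigenvalues i) (hb' : ∃ i, hZ.1.eigenvalues i = b) :
    traceNorm (Z * A * B) ≤ (a + b) / (2 * Real.sqrt (a * b)) * traceNorm (B * Z * A) :=
  stmt_3_general n A B Z hAB hZ a b ha hb hb'
end

section
/- Let A, B be n×n complex matrices with AB positive semidefinite, and let Z be positive definite with largest eigenvalue a and smallest eigenvalue b. Then ‖ZAB‖ ≤ ((a+b)/(2√(ab))) · ‖BZA‖, where ‖·‖ is the operator norm. -/
/-!
The argument works in any unital C⋆-algebra, with `x, y, z` in place of `A, B, Z`.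
Write `x * y = r * r` with `r = √(x * y)`, and put `s = r * r`, `c = ‖r * z * r‖`.
From `b ≤ z ≤ a` we get `(a - z) * (z - b) ≥ 0`, i.e. `z² ≤ (a + b) z - a b`. Conjugating by `s`
and using `s z s = r (r z r) r ≤ c s` gives `s z² s ≤ (a + b) c s - a b s²`, and completing the
square in `s` bounds the right-hand side by `((a + b) / (2 √(a b)) * c)²`. Since
`s z² s = (z s)⋆ (z s)`, the C⋆-identity turns this into `‖z x y‖ ≤ (a + b) / (2 √(a b)) * c`.
Finally `r z r` is self-adjoint, so its norm is its spectral radius, which equals that of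
`z r² = z x y` and hence that of `y z x`; a spectral radius is at most the norm.
-/

section StarOrderedAlgebra

variable {R : Type*} [Ring R] [PartialOrder R] [StarRing R] [StarOrderedRing R] [Algebra ℝ R]
  [StarModule ℝ R]

lemma isSelfAdjoint_of_algebraMap_le {z : R} {b : ℝ} (hbz : algebraMap ℝ R b ≤ z) :
    IsSelfAdjoint z := by
  simpa using (IsSelfAdjoint.of_nonneg (sub_nonneg.mpr hbz)).add (.algebraMap R (.all b))

lemma IsSelfAdjoint.smul_sub_smul_mul_self_le [PosSMulMono ℝ R] {s : R} (hs : IsSelfAdjoint s)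
    {p t : ℝ} (hp : 0 ≤ p) : (2 * p * t) • s - p • (s * s) ≤ (p * t ^ 2) • 1 := by
  have h : 0 ≤ p • ((s - t • 1) * (s - t • 1)) :=
    smul_nonneg hp (hs.sub ((IsSelfAdjoint.all t).smul (.one R))).mul_self_nonneg
  rw [← sub_nonneg]
  convert h using 1
  simp only [sub_mul, mul_sub, smul_mul_assoc, mul_smul_comm, one_mul, mul_one]
  module

end StarOrderedAlgebra

section SpectralRadius

open scoped ENNReal

variable {𝕜 A : Type*} [NormedField 𝕜] [Ring A] [Algebra 𝕜 A]

lemma spectralRadius_mul_comm (x y : A) :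
    spectralRadius 𝕜 (x * y) = spectralRadius 𝕜 (y * x) := by
  suffices h : ∀ x y : A, spectralRadius 𝕜 (x * y) ≤ spectralRadius 𝕜 (y * x) from
    (h x y).antisymm (h y x)
  intro x y
  refine iSup₂_le fun k hk => ?_
  rcases eq_or_ne k 0 with rfl | hk0
  · simp
  · have hk' : k ∈ spectrum 𝕜 (y * x) \ {0} :=
      spectrum.nonzero_mul_comm (𝕜 := 𝕜) x y ▸ ⟨hk, hk0⟩
    exact le_iSup₂ (f := fun k (_ : k ∈ spectrum 𝕜 (y * x)) => (‖k‖₊ : ℝ≥0∞)) k hk'.1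

end SpectralRadius

namespace CStarAlgebra

variable {A : Type*} [CStarAlgebra A]

lemma norm_conj_le_of_mul_self_eq {r z x y : A} (hr : IsSelfAdjoint r) (hz : IsSelfAdjoint z)
    (h : r * r = x * y) : ‖r * z * r‖ ≤ ‖y * z * x‖ := by
  nontriviality A
  have hrzr : IsSelfAdjoint (r * z * r) := by simpa [hr.star_eq] using hz.conjugate r
  have hrad : spectralRadius ℂ (r * z * r) = spectralRadius ℂ (y * z * x) :=
    calc spectralRadius ℂ (r * z * r) = spectralRadius ℂ (z * (r * r)) := by
          rw [mul_assoc, spectralRadius_mul_comm (𝕜 := ℂ), mul_assoc]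
      _ = spectralRadius ℂ (y * z * x) := by
          rw [h, ← mul_assoc, spectralRadius_mul_comm (𝕜 := ℂ), mul_assoc]
  have hle := spectrum.spectralRadius_le_nnnorm (𝕜 := ℂ) (y * z * x)
  rw [← hrad, hrzr.spectralRadius_eq_nnnorm] at hle
  exact_mod_cast hle

variable [PartialOrder A] [StarOrderedRing A]

lemma mul_self_le_of_algebraMap_le_of_le_algebraMap {z : A} {a b : ℝ}
    (hbz : algebraMap ℝ A b ≤ z) (hza : z ≤ algebraMap ℝ A a) :
    z * z ≤ (a + b) • z - (a * b) • 1 := by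
  have hcomm : Commute (algebraMap ℝ A a - z) (z - algebraMap ℝ A b) :=
    ((Algebra.commute_algebraMap_left a z).sub_left (.refl z)).sub_right
      (Algebra.commute_algebraMap_right b _)
  have h := Commute.mul_nonneg (sub_nonneg.mpr hza) (sub_nonneg.mpr hbz) hcomm
  rw [← sub_nonneg]
  convert h using 1
  simp only [Algebra.algebraMap_eq_smul_one, sub_mul, mul_sub, smul_mul_assoc, mul_smul_comm,
    one_mul, mul_one]
  module

lemma conj_mul_self_le_smul_one {z r : A} {a b : ℝ} (hr : IsSelfAdjoint r)
    (hbz : algebraMap ℝ A b ≤ z) (hza : z ≤ algebraMap ℝ A a) (hb : 0 < b) (hba : b ≤ a) :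
    (r * r) * (z * z) * (r * r) ≤ ((a + b) / (2 * √(a * b)) * ‖r * z * r‖) ^ 2 • (1 : A) := by
  set s := r * r
  set c := ‖r * z * r‖
  have ha : 0 < a := hb.trans_le hba
  have hab : 0 < a * b := mul_pos ha hb
  have hs : IsSelfAdjoint s := by simpa [hr.star_eq] using IsSelfAdjoint.star_mul_self r
  have hrzr : IsSelfAdjoint (r * z * r) := by
    simpa [hr.star_eq] using (isSelfAdjoint_of_algebraMap_le hbz).conjugate r
  have hszs : s * z * s ≤ c • s :=
    calc s * z * s = r * (r * z * r) * r := by simp only [s, mul_assoc]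
      _ ≤ r * algebraMap ℝ A c * r := hr.conjugate_le_conjugate hrzr.le_algebraMap_norm_self
      _ = c • s := by rw [Algebra.algebraMap_eq_smul_one, mul_smul_comm, mul_one, smul_mul_assoc]
  calc s * (z * z) * s ≤ s * ((a + b) • z - (a * b) • 1) * s :=
        hs.conjugate_le_conjugate (mul_self_le_of_algebraMap_le_of_le_algebraMap hbz hza)
    _ = (a + b) • (s * z * s) - (a * b) • (s * s) := by
        simp only [sub_mul, mul_sub, smul_mul_assoc, mul_smul_comm, mul_one]
    _ ≤ (a + b) • (c • s) - (a * b) • (s * s) := by gcongr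
    _ = (2 * (a * b) * ((a + b) * c / (2 * (a * b)))) • s - (a * b) • (s * s) := by
        rw [smul_smul]; congr 2; field_simp [ha.ne', hb.ne']
    _ ≤ ((a * b) * ((a + b) * c / (2 * (a * b))) ^ 2) • 1 :=
        hs.smul_sub_smul_mul_self_le hab.le
    _ = ((a + b) / (2 * √(a * b)) * c) ^ 2 • 1 := by
        congr 1
        field_simp [ha.ne', hb.ne']
        rw [Real.sq_sqrt hab.le]
        ring

lemma norm_mul_mul_self_le {z r : A} {a b : ℝ} (hr : IsSelfAdjoint r)
    (hbz : algebraMap ℝ A b ≤ z) (hza : z ≤ algebraMap ℝ A a) (hb : 0 < b) (hba : b ≤ a) :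
    ‖z * (r * r)‖ ≤ (a + b) / (2 * √(a * b)) * ‖r * z * r‖ := by
  have hz := isSelfAdjoint_of_algebraMap_le hbz
  have hstar : star (z * (r * r)) * (z * (r * r)) = (r * r) * (z * z) * (r * r) := by
    simp only [star_mul, hr.star_eq, hz.star_eq, mul_assoc]
  have hbound : 0 ≤ (a + b) / (2 * √(a * b)) * ‖r * z * r‖ := by
    have : 0 ≤ a + b := by linarith
    positivity
  have hsq : ‖star (z * (r * r)) * (z * (r * r))‖ ≤
      ((a + b) / (2 * √(a * b)) * ‖r * z * r‖) ^ 2 := by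
    rw [norm_le_iff_le_algebraMap _ (sq_nonneg _) (star_mul_self_nonneg _), hstar,
      Algebra.algebraMap_eq_smul_one]
    exact conj_mul_self_le_smul_one hr hbz hza hb hba
  rw [CStarRing.norm_star_mul_self, ← sq] at hsq
  exact (pow_le_pow_iff_left₀ (norm_nonneg _) hbound two_ne_zero).mp hsq

theorem norm_mul_mul_le_of_nonneg {z x y : A} {a b : ℝ} (hxy : 0 ≤ x * y)
    (hbz : algebraMap ℝ A b ≤ z) (hza : z ≤ algebraMap ℝ A a) (hb : 0 < b) (hba : b ≤ a) :
    ‖z * x * y‖ ≤ (a + b) / (2 * √(a * b)) * ‖y * z * x‖ := by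
  set r := CFC.sqrt (x * y)
  have hr : IsSelfAdjoint r := (CFC.sqrt_nonneg _).isSelfAdjoint
  have hrr : r * r = x * y := CFC.sqrt_mul_sqrt_self _ hxy
  have hκ : 0 ≤ (a + b) / (2 * √(a * b)) := by
    have : 0 ≤ a + b := by linarith
    positivity
  calc ‖z * x * y‖ = ‖z * (r * r)‖ := by rw [hrr, mul_assoc]
    _ ≤ (a + b) / (2 * √(a * b)) * ‖r * z * r‖ := norm_mul_mul_self_le hr hbz hza hb hba
    _ ≤ (a + b) / (2 * √(a * b)) * ‖y * z * x‖ := by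
        gcongr
        exact norm_conj_le_of_mul_self_eq hr (isSelfAdjoint_of_algebraMap_le hbz) hrr

end CStarAlgebra

namespace Matrix

open scoped MatrixOrder

variable {n 𝕜 : Type*} [Fintype n] [DecidableEq n] [RCLike 𝕜] {Z : Matrix n n 𝕜}

lemma IsHermitian.algebraMap_le_of_le_eigenvalues (hZ : Z.IsHermitian) {b : ℝ}
    (h : ∀ i, b ≤ hZ.eigenvalues i) : algebraMap ℝ (Matrix n n 𝕜) b ≤ Z := by
  rw [algebraMap_le_iff_le_spectrum hZ.isSelfAdjoint, hZ.spectrum_real_eq_range_eigenvalues]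
  rintro _ ⟨i, rfl⟩
  exact h i

lemma IsHermitian.le_algebraMap_of_eigenvalues_le (hZ : Z.IsHermitian) {a : ℝ}
    (h : ∀ i, hZ.eigenvalues i ≤ a) : Z ≤ algebraMap ℝ (Matrix n n 𝕜) a := by
  rw [le_algebraMap_iff_spectrum_le hZ.isSelfAdjoint, hZ.spectrum_real_eq_range_eigenvalues]
  rintro _ ⟨i, rfl⟩
  exact h i

end Matrix

open scoped ComplexOrder

theorem stmt_4_general (n : ℕ) (A B Z : Matrix (Fin n) (Fin n) ℂ)
    (hAB : (A * B).PosSemidef) (hZ : Z.PosDef) (a b : ℝ)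
    (ha : ∀ i, hZ.1.eigenvalues i ≤ a)
    (hb : ∀ i, b ≤ hZ.1.eigenvalues i) (hb' : ∃ i, hZ.1.eigenvalues i = b) :
    ‖Matrix.toEuclideanCLM (𝕜 := ℂ) (Z * A * B)‖ ≤
      (a + b) / (2 * Real.sqrt (a * b)) * ‖Matrix.toEuclideanCLM (𝕜 := ℂ) (B * Z * A)‖ := by
  obtain ⟨i, rfl⟩ := hb'
  -- the C⋆-norm of `Matrix.Norms.L2Operator` is by definition the norm of `toEuclideanCLM`
  open scoped Matrix.Norms.L2Operator MatrixOrder in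
  exact CStarAlgebra.norm_mul_mul_le_of_nonneg hAB.nonneg
    (hZ.1.algebraMap_le_of_le_eigenvalues hb) (hZ.1.le_algebraMap_of_eigenvalues_le ha)
    (hZ.eigenvalues_pos i) (ha i)

theorem stmt_4 (n : ℕ) (A B Z : Matrix (Fin n) (Fin n) ℂ)
    (hAB : (A * B).PosSemidef) (hZ : Z.PosDef) (a b : ℝ)
    (ha : ∀ i, hZ.1.eigenvalues i ≤ a) (ha' : ∃ i, hZ.1.eigenvalues i = a)
    (hb : ∀ i, b ≤ hZ.1.eigenvalues i) (hb' : ∃ i, hZ.1.eigenvalues i = b) :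
    ‖Matrix.toEuclideanCLM (𝕜 := ℂ) (Z * A * B)‖ ≤
      (a + b) / (2 * Real.sqrt (a * b)) * ‖Matrix.toEuclideanCLM (𝕜 := ℂ) (B * Z * A)‖ :=
  stmt_4_general n A B Z hAB hZ a b ha hb hb'
end

section
/- Let A be positive semidefinite and Z positive definite with extremal eigenvalues a ≥ b > 0. Then ‖AZ‖₁ ≤ ((a+b)/(2√(ab))) · Tr(AZ), where ‖·‖₁ is the trace norm. -/
open scoped ComplexOrder

/-!
Write `A * Z = √A * (√A * Z)`. The Hölder-type bound `‖X * Y‖₁ ≤ ‖X‖₂ ‖Y‖₂` (Frobenius norms) gives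
`‖A * Z‖₁ ≤ √(tr A) * √(tr (A * Z²))`. Since the spectrum of `Z` lies in `[b, a]`, we have
`(a - Z)(Z - b) ⪰ 0`, i.e. `Z² + a b ≤ (a + b) Z`, hence `tr (A Z²) + a b tr A ≤ (a + b) tr (A Z)`,
and AM-GM applied to the two terms on the left finishes the proof.

The Hölder bound comes from a partial isometry `U` and a unitary `V` with `Uᴴ M V` the diagonal of
singular values of `M = X * Y`, so that `‖M‖₁ = Re tr ((Xᴴ U)ᴴ (Y V))`, followed by
Cauchy-Schwarz for the Frobenius inner product.
-/

open Matrix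
open scoped MatrixOrder

lemma sqrt_mul_sqrt_le_of_add_mul_le {p q c s : ℝ} (hp : 0 ≤ p) (hq : 0 ≤ q) (hc : 0 < c)
    (h : q + c * p ≤ s) : √p * √q ≤ s / (2 * √c) := by
  rw [le_div_iff₀ (by positivity)]
  nlinarith [sq_nonneg (√c * √p - √q), Real.sq_sqrt hp, Real.sq_sqrt hq, Real.sq_sqrt hc.le]

section StarRing

variable {R : Type*} [Ring R] [StarRing R]

lemma isStarProjection_mul_star_of_mul_star_mul_self {u : R} (hu : u * (star u * u) = u) :
    IsStarProjection (u * star u) where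
  isIdempotentElem := by
    rw [IsIdempotentElem, ← mul_assoc, mul_assoc u, hu]
  isSelfAdjoint := .mul_star_self u

end StarRing

namespace Matrix

variable {m 𝕜 : Type*} [Fintype m] [DecidableEq m] [RCLike 𝕜]

lemma IsHermitian.mul_self_add_smul_one_le {Z : Matrix m m 𝕜} (hZ : Z.IsHermitian) {a b : ℝ}
    (ha : ∀ i, hZ.eigenvalues i ≤ a) (hb : ∀ i, b ≤ hZ.eigenvalues i) :
    Z * Z + (a * b) • 1 ≤ (a + b) • Z := by
  have hsa : IsSelfAdjoint Z := hZ.isSelfAdjoint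
  have h : 0 ≤ cfc (fun x : ℝ => (a - x) * (x - b)) Z := by
    refine cfc_nonneg fun x hx => ?_
    rw [hZ.spectrum_real_eq_range_eigenvalues] at hx
    obtain ⟨i, rfl⟩ := hx
    exact mul_nonneg (sub_nonneg.2 (ha i)) (sub_nonneg.2 (hb i))
  rw [cfc_mul _ _ Z, cfc_sub _ _ Z, cfc_sub _ _ Z, cfc_const a Z, cfc_const b Z, cfc_id' ℝ Z,
    Algebra.algebraMap_eq_smul_one, Algebra.algebraMap_eq_smul_one] at h
  rw [← sub_nonneg]
  convert h using 1
  simp only [sub_mul, mul_sub, smul_mul_assoc, mul_smul_comm, one_mul, mul_one]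
  module

lemma PosSemidef.re_trace_mul_le_re_trace_mul {A M N : Matrix m m 𝕜} (hA : A.PosSemidef)
    (hMN : M ≤ N) : RCLike.re (A * M).trace ≤ RCLike.re (A * N).trace := by
  have hS : IsSelfAdjoint (CFC.sqrt A) := (CFC.sqrt_nonneg A).isSelfAdjoint
  have h_conj (X : Matrix m m 𝕜) : (A * X).trace = (CFC.sqrt A * X * CFC.sqrt A).trace := by
    rw [trace_mul_comm (CFC.sqrt A * X), ← Matrix.mul_assoc, CFC.sqrt_mul_sqrt_self A hA.nonneg]
  rw [h_conj, h_conj]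
  exact RCLike.re_le_re <|
    (tracePositiveLinearMap m ℝ 𝕜).monotone' (hS.conjugate_le_conjugate hMN)

lemma re_trace_conjTranspose_mul_le (C B : Matrix m m 𝕜) :
    RCLike.re (Cᴴ * B).trace ≤
      √(RCLike.re (Cᴴ * C).trace) * √(RCLike.re (Bᴴ * B).trace) := by
  -- the inner product induced by the weight `1` is `⟪x, y⟫ = tr (y * xᴴ)`
  let _ := (1 : Matrix m m 𝕜).toMatrixSeminormedAddCommGroup PosSemidef.one
  let _ := (1 : Matrix m m 𝕜).toMatrixInnerProductSpace PosSemidef.one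
  have h := re_inner_le_norm (𝕜 := 𝕜) C B
  rw [norm_eq_sqrt_re_inner (𝕜 := 𝕜), norm_eq_sqrt_re_inner (𝕜 := 𝕜)] at h
  change RCLike.re (B * 1 * Cᴴ).trace ≤
    √(RCLike.re (C * 1 * Cᴴ).trace) * √(RCLike.re (B * 1 * Bᴴ).trace) at h
  simp only [Matrix.mul_one] at h
  rwa [trace_mul_comm B, trace_mul_comm C, trace_mul_comm B] at h

lemma re_trace_conjTranspose_mul_self_mul_le {U : Matrix m m 𝕜} (hU : U * Uᴴ ≤ 1)
    (C : Matrix m m 𝕜) :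
    RCLike.re ((C * U)ᴴ * (C * U)).trace ≤ RCLike.re (Cᴴ * C).trace := by
  have h := (posSemidef_conjTranspose_mul_self C).re_trace_mul_le_re_trace_mul hU
  simpa only [Matrix.mul_one, conjTranspose_mul, Matrix.mul_assoc, trace_mul_comm Uᴴ] using h

lemma exists_mul_conjTranspose_le_one_conjTranspose_mul_eq_diagonal_sqrt {N : Matrix m m 𝕜}
    {μ : m → ℝ} (hN : Nᴴ * N = diagonal (RCLike.ofReal ∘ μ)) :
    ∃ U : Matrix m m 𝕜, U * Uᴴ ≤ 1 ∧ Uᴴ * N = diagonal fun i => (√(μ i) : 𝕜) := by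
  -- `(√0)⁻¹ = 0`, so `U` kills the null columns of `N` and `Uᴴ * U` is a diagonal projection.
  set d : m → 𝕜 := fun i => ((√(μ i) : 𝕜))⁻¹
  have hUN : (N * diagonal d)ᴴ * N = diagonal fun i => (√(μ i) : 𝕜) := by
    rw [conjTranspose_mul, diagonal_conjTranspose, Matrix.mul_assoc, hN, diagonal_mul_diagonal]
    congr 1; funext i
    simp only [d, Pi.star_apply, star_inv₀, RCLike.star_def, RCLike.conj_ofReal,
      Function.comp_apply]
    rw [← RCLike.ofReal_inv, ← RCLike.ofReal_mul, inv_mul_eq_div, Real.div_sqrt]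
  refine ⟨N * diagonal d, IsStarProjection.le_one ?_, hUN⟩
  apply isStarProjection_mul_star_of_mul_star_mul_self
  rw [star_eq_conjTranspose, ← Matrix.mul_assoc _ N, hUN, Matrix.mul_assoc,
    ← Matrix.mul_assoc _ _ (diagonal d), diagonal_mul_diagonal, diagonal_mul_diagonal]
  congr 2; funext i
  simpa only [d, inv_inv] using mul_inv_mul_cancel ((√(μ i) : 𝕜))⁻¹

end Matrix

lemma exists_traceNorm_eq_re_trace {n : ℕ} (M : Matrix (Fin n) (Fin n) ℂ) :
    ∃ U V : Matrix (Fin n) (Fin n) ℂ,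
      U * Uᴴ ≤ 1 ∧ V * Vᴴ ≤ 1 ∧ traceNorm M = (Uᴴ * M * V).trace.re := by
  set h := (posSemidef_conjTranspose_mul_self M).1
  set V : Matrix (Fin n) (Fin n) ℂ := ↑h.eigenvectorUnitary
  have hN : (M * V)ᴴ * (M * V) = diagonal (RCLike.ofReal ∘ h.eigenvalues) := by
    rw [← h.conjStarAlgAut_star_eigenvectorUnitary, Unitary.conjStarAlgAut_star_apply]
    simp only [V, conjTranspose_mul, star_eq_conjTranspose, Matrix.mul_assoc]
  obtain ⟨U, hU, hUN⟩ := exists_mul_conjTranspose_le_one_conjTranspose_mul_eq_diagonal_sqrt hN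
  refine ⟨U, V, hU, (Unitary.coe_mul_star_self h.eigenvectorUnitary).le, ?_⟩
  rw [Matrix.mul_assoc, hUN, trace_diagonal, Complex.re_sum]
  rfl

theorem traceNorm_mul_le {n : ℕ} (X Y : Matrix (Fin n) (Fin n) ℂ) :
    traceNorm (X * Y) ≤ √(Xᴴ * X).trace.re * √(Yᴴ * Y).trace.re := by
  obtain ⟨U, V, hU, hV, h⟩ := exists_traceNorm_eq_re_trace (X * Y)
  have hXU := re_trace_conjTranspose_mul_self_mul_le hU Xᴴ
  have hYV := re_trace_conjTranspose_mul_self_mul_le hV Y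
  rw [conjTranspose_conjTranspose, trace_mul_comm X] at hXU
  calc traceNorm (X * Y) = ((Xᴴ * U)ᴴ * (Y * V)).trace.re := by
        rw [h, conjTranspose_mul, conjTranspose_conjTranspose]; simp only [Matrix.mul_assoc]
    _ ≤ √((Xᴴ * U)ᴴ * (Xᴴ * U)).trace.re * √((Y * V)ᴴ * (Y * V)).trace.re :=
        re_trace_conjTranspose_mul_le (Xᴴ * U) (Y * V)
    _ ≤ √(Xᴴ * X).trace.re * √(Yᴴ * Y).trace.re :=
        mul_le_mul (Real.sqrt_le_sqrt hXU) (Real.sqrt_le_sqrt hYV) (Real.sqrt_nonneg _)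
          (Real.sqrt_nonneg _)

theorem stmt_6_general (n : ℕ) (A Z : Matrix (Fin n) (Fin n) ℂ)
    (hA : A.PosSemidef) (hZ : Z.PosDef) (a b : ℝ)
    (ha : ∀ i, hZ.1.eigenvalues i ≤ a)
    (hb : ∀ i, b ≤ hZ.1.eigenvalues i) (hb' : ∃ i, hZ.1.eigenvalues i = b) :
    traceNorm (A * Z) ≤ (a + b) / (2 * Real.sqrt (a * b)) * ((A * Z).trace).re := by
  obtain ⟨i₀, hi₀⟩ := hb'
  have hb₀ : 0 < b := hi₀ ▸ hZ.eigenvalues_pos i₀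
  have hab : 0 < a * b := mul_pos (hb₀.trans_le (hi₀ ▸ ha i₀)) hb₀
  set S := CFC.sqrt A
  have hSS : S * S = A := CFC.sqrt_mul_sqrt_self A hA.nonneg
  have hS : Sᴴ = S := (CFC.sqrt_nonneg A).isSelfAdjoint
  have hkey : ((S * Z)ᴴ * (S * Z)).trace.re + a * b * (Sᴴ * S).trace.re ≤
      (a + b) * (A * Z).trace.re := by
    have h := hA.re_trace_mul_le_re_trace_mul (hZ.1.mul_self_add_smul_one_le ha hb)
    have hSZ : ((S * Z)ᴴ * (S * Z)).trace = (A * (Z * Z)).trace := by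
      rw [conjTranspose_mul, hS, hZ.1.eq, Matrix.mul_assoc, ← Matrix.mul_assoc S, hSS,
        trace_mul_comm, Matrix.mul_assoc]
    rw [hSZ, hS, hSS]
    simp only [Matrix.mul_add, mul_smul_comm, Matrix.mul_one, trace_add, trace_smul, map_add,
      RCLike.smul_re] at h
    exact h
  have hnonneg (C : Matrix (Fin n) (Fin n) ℂ) : 0 ≤ (Cᴴ * C).trace.re :=
    (RCLike.nonneg_iff.1 (posSemidef_conjTranspose_mul_self C).trace_nonneg).1
  calc traceNorm (A * Z) = traceNorm (S * (S * Z)) := by rw [← Matrix.mul_assoc, hSS]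
    _ ≤ √(Sᴴ * S).trace.re * √((S * Z)ᴴ * (S * Z)).trace.re := traceNorm_mul_le _ _
    _ ≤ (a + b) * (A * Z).trace.re / (2 * √(a * b)) :=
        sqrt_mul_sqrt_le_of_add_mul_le (hnonneg _) (hnonneg _) hab hkey
    _ = (a + b) / (2 * √(a * b)) * (A * Z).trace.re := by ring

theorem stmt_6 (n : ℕ) (A Z : Matrix (Fin n) (Fin n) ℂ)
    (hA : A.PosSemidef) (hZ : Z.PosDef) (a b : ℝ)
    (ha : ∀ i, hZ.1.eigenvalues i ≤ a) (ha' : ∃ i, hZ.1.eigenvalues i = a)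
    (hb : ∀ i, b ≤ hZ.1.eigenvalues i) (hb' : ∃ i, hZ.1.eigenvalues i = b) :
    traceNorm (A * Z) ≤ (a + b) / (2 * Real.sqrt (a * b)) * ((A * Z).trace).re :=
  stmt_6_general n A Z hA hZ a b ha hb hb'
end

section
/- Let A, Z be n×n Hermitian matrices with 0 ≤ A ≤ I and Z positive definite with largest eigenvalue a and smallest eigenvalue b. Then AZA ≤ ((a+b)²/(4ab)) · Z in the Loewner order. -/
/-!
For `t ∈ [b, a]` we have `a + b - t - ab/t = (a - t)(t - b)/t ≥ 0`, so by functional calculus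
`ab • z⁻¹ ≤ (a + b) - z`. Conjugating by `x` and using `x² ≤ x` gives
`x z x ≤ (a + b) • x - ab • x z⁻¹ x`. On the other side, expanding
`0 ≤ (s z - r x) z⁻¹ (s z - r x)` with `r = √(ab)`, `s = (a + b)/(2r)` is an operator AM–GM
inequality `(a + b) • x ≤ (a + b)²/(4ab) • z + ab • x z⁻¹ x`. Adding the two proves the claim.
-/

open scoped ComplexOrder Ring

section StarOrderedRing

variable {A : Type*} [Ring A] [PartialOrder A] [StarRing A] [StarOrderedRing A]

theorem mul_self_le_self_of_nonneg_of_le_one {x : A} (h0 : 0 ≤ x) (h1 : x ≤ 1) :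
    x * x ≤ x := by
  have h1' : 0 ≤ 1 - x := sub_nonneg.mpr h1
  have hsum : x - x * x = x * (1 - x) * x + (1 - x) * x * (1 - x) := by noncomm_ring
  rw [← sub_nonneg, hsum]
  exact add_nonneg ((IsSelfAdjoint.of_nonneg h0).conjugate_nonneg h1')
    ((IsSelfAdjoint.of_nonneg h1').conjugate_nonneg h0)

variable [Algebra ℝ A] [StarModule ℝ A]

theorem two_mul_smul_le_of_inverse_nonneg {x z : A} (hx : IsSelfAdjoint x) (hz : IsSelfAdjoint z)
    (hzu : IsUnit z) (hz' : 0 ≤ z⁻¹ʳ) (s r : ℝ) :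
    (2 * s * r) • x ≤ s ^ 2 • z + r ^ 2 • (x * z⁻¹ʳ * x) := by
  have h := star_left_conjugate_nonneg hz' (s • z - r • x)
  have hexp : star (s • z - r • x) * z⁻¹ʳ * (s • z - r • x)
      = s ^ 2 • z + r ^ 2 • (x * z⁻¹ʳ * x) - (2 * s * r) • x := by
    rw [star_sub, star_smul, star_smul, hx.star_eq, hz.star_eq, star_trivial, star_trivial]
    simp only [sub_mul, mul_sub, smul_mul_assoc, mul_smul_comm, mul_assoc,
      Ring.mul_inverse_cancel z hzu, Ring.inverse_mul_cancel z hzu, one_mul, mul_one]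
    module
  rwa [hexp, sub_nonneg] at h

end StarOrderedRing

theorem isUnit_of_spectrum_subset_Icc {A : Type*} [Ring A] [Algebra ℝ A] {z : A} {a b : ℝ}
    (hb : 0 < b) (hspec : spectrum ℝ z ⊆ Set.Icc b a) : IsUnit z :=
  spectrum.isUnit_of_zero_notMem ℝ fun h0 => (hspec h0).1.not_gt hb

section CFC

variable {A : Type*} [Ring A] [PartialOrder A] [StarRing A] [StarOrderedRing A]
  [TopologicalSpace A] [Algebra ℝ A] [ContinuousFunctionalCalculus ℝ A IsSelfAdjoint]
  {z : A} {a b : ℝ}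

theorem inverse_nonneg_of_spectrum_subset_Icc (hz : IsSelfAdjoint z) (hb : 0 < b)
    (hspec : spectrum ℝ z ⊆ Set.Icc b a) : 0 ≤ z⁻¹ʳ := by
  have h := cfc_nonneg (a := z) (f := fun t : ℝ => t⁻¹) fun t ht =>
    inv_nonneg.mpr (hb.le.trans (hspec ht).1)
  rwa [cfc_ringInverse_id z (isUnit_of_spectrum_subset_Icc hb hspec)] at h

theorem smul_inverse_le_algebraMap_sub_of_spectrum_subset_Icc (hz : IsSelfAdjoint z)
    (hb : 0 < b) (hspec : spectrum ℝ z ⊆ Set.Icc b a) :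
    (a * b) • z⁻¹ʳ ≤ algebraMap ℝ A (a + b) - z := by
  have hinv : ContinuousOn (fun t : ℝ => t⁻¹) (spectrum ℝ z) :=
    continuousOn_inv₀.mono fun t ht => (hb.trans_le (hspec ht).1).ne'
  have hcfc : cfc (fun t => a + b - t - a * b * t⁻¹) z
      = algebraMap ℝ A (a + b) - z - (a * b) • z⁻¹ʳ := by
    rw [cfc_sub (fun t => a + b - t) (fun t => a * b * t⁻¹) z (hg := hinv.const_smul (a * b)),
      cfc_sub (fun _ => a + b) (fun t => t) z, cfc_const (a + b) z, cfc_id' ℝ z,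
      cfc_const_mul _ _ _ hinv, cfc_ringInverse_id z (isUnit_of_spectrum_subset_Icc hb hspec)]
  rw [← sub_nonneg, ← hcfc]
  refine cfc_nonneg fun t ht => ?_
  obtain ⟨hbt, hta⟩ := hspec ht
  have ht0 : 0 < t := hb.trans_le hbt
  have hfactor : a + b - t - a * b * t⁻¹ = (a - t) * (t - b) / t := by field_simp; ring
  rw [hfactor]
  exact div_nonneg (mul_nonneg (sub_nonneg.mpr hta) (sub_nonneg.mpr hbt)) ht0.le

theorem mul_mul_le_smul_of_spectrum_subset_Icc [StarModule ℝ A] {x : A} (hx0 : 0 ≤ x)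
    (hx1 : x ≤ 1) (hz : IsSelfAdjoint z) (hb : 0 < b) (hba : b ≤ a)
    (hspec : spectrum ℝ z ⊆ Set.Icc b a) :
    x * z * x ≤ ((a + b) ^ 2 / (4 * a * b)) • z := by
  have hx : IsSelfAdjoint x := .of_nonneg hx0
  have hab : 0 < a * b := mul_pos (hb.trans_le hba) hb
  set r := √(a * b)
  have hr0 : 0 < r := Real.sqrt_pos.mpr hab
  have hr2 : r ^ 2 = a * b := Real.sq_sqrt hab.le
  have hs2 : ((a + b) / (2 * r)) ^ 2 = (a + b) ^ 2 / (4 * a * b) := by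
    rw [div_pow, mul_pow, hr2]; ring
  have hsr : 2 * ((a + b) / (2 * r)) * r = a + b := by field_simp
  have hamgm := two_mul_smul_le_of_inverse_nonneg hx hz (isUnit_of_spectrum_subset_Icc hb hspec)
    (inverse_nonneg_of_spectrum_subset_Icc hz hb hspec) ((a + b) / (2 * r)) r
  rw [hs2, hsr, hr2] at hamgm
  have hconj := star_left_conjugate_le_conjugate
    (smul_inverse_le_algebraMap_sub_of_spectrum_subset_Icc hz hb hspec) x
  simp only [hx.star_eq, Algebra.algebraMap_eq_smul_one, mul_sub, sub_mul, mul_smul_comm,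
    smul_mul_assoc, mul_one] at hconj
  have hxx : (a + b) • (x * x) ≤ (a + b) • x :=
    smul_le_smul_of_nonneg_left (mul_self_le_self_of_nonneg_of_le_one hx0 hx1) (by linarith)
  calc x * z * x ≤ (a + b) • (x * x) - (a * b) • (x * z⁻¹ʳ * x) := le_sub_comm.mp hconj
    _ ≤ (a + b) • x - (a * b) • (x * z⁻¹ʳ * x) := sub_le_sub_right hxx _
    _ ≤ ((a + b) ^ 2 / (4 * a * b)) • z := sub_le_iff_le_add.mpr hamgm

end CFC

theorem stmt_7_general (n : ℕ) (A Z : Matrix (Fin n) (Fin n) ℂ)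
    (hA0 : A.PosSemidef) (hA1 : (1 - A).PosSemidef) (hZ : Z.PosDef) (a b : ℝ)
    (ha : ∀ i, hZ.1.eigenvalues i ≤ a)
    (hb : ∀ i, b ≤ hZ.1.eigenvalues i) (hb' : ∃ i, hZ.1.eigenvalues i = b) :
    (((a + b) ^ 2 / (4 * a * b) : ℝ) • Z - A * Z * A).PosSemidef := by
  obtain ⟨i, rfl⟩ := hb'
  have hspec : spectrum ℝ Z ⊆ Set.Icc (hZ.1.eigenvalues i) a := by
    rw [hZ.1.spectrum_real_eq_range_eigenvalues]
    rintro _ ⟨j, rfl⟩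
    exact ⟨hb j, ha j⟩
  open scoped MatrixOrder in
  exact Matrix.le_iff.mp <| mul_mul_le_smul_of_spectrum_subset_Icc hA0.nonneg
    (Matrix.le_iff.mpr hA1) hZ.1.isSelfAdjoint (hZ.eigenvalues_pos i) (ha i) hspec

theorem stmt_7 (n : ℕ) (A Z : Matrix (Fin n) (Fin n) ℂ)
    (hA0 : A.PosSemidef) (hA1 : (1 - A).PosSemidef) (hZ : Z.PosDef) (a b : ℝ)
    (ha : ∀ i, hZ.1.eigenvalues i ≤ a) (ha' : ∃ i, hZ.1.eigenvalues i = a)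
    (hb : ∀ i, b ≤ hZ.1.eigenvalues i) (hb' : ∃ i, hZ.1.eigenvalues i = b) :
    (((a + b) ^ 2 / (4 * a * b) : ℝ) • Z - A * Z * A).PosSemidef :=
  stmt_7_general n A Z hA0 hA1 hZ a b ha hb hb'
end

section
/- Let Z be positive definite with extremal eigenvalues a ≥ b > 0 and let E be an orthogonal projection. Then EZE ≤ ((a+b)²/(4ab)) · Z in the Loewner order. -/
/-!
For `b ≤ z ≤ a` and a star projection `e`, put `w± = (a - b) e ± (a + b) (1 - e)`. Since
`e (1 - e) = 0`, expanding gives the identity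
`b • w₋ (a - z) w₋ + a • w₊ (z - b) w₊ = (a - b) • ((a + b)² z - 4ab · e z e)`,
whose left side is a sum of conjugates of positive elements. Dividing by `a - b > 0` gives
`4ab · e z e ≤ (a + b)² z`; when `a = b`, `z` is the scalar `a` and the claim is `e ≤ 1`.
-/

open scoped ComplexOrder MatrixOrder

section StarOrderedAlgebra

variable {A : Type*} [Ring A] [PartialOrder A] [StarRing A] [StarOrderedRing A] [Algebra ℝ A]
  [StarModule ℝ A] [PosSMulMono ℝ A] {e z : A} {a b : ℝ}

theorem IsStarProjection.smul_mul_mul_le_smul (he : IsStarProjection e) (hb : 0 ≤ b)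
    (hab : b ≤ a) (hbz : algebraMap ℝ A b ≤ z) (hza : z ≤ algebraMap ℝ A a) :
    (4 * a * b) • (e * z * e) ≤ (a + b) ^ 2 • z := by
  rcases hab.eq_or_lt with rfl | hlt
  · obtain rfl : z = algebraMap ℝ A b := le_antisymm hza hbz
    have hproj : e * algebraMap ℝ A b * e = b • e := by
      rw [Algebra.algebraMap_eq_smul_one, mul_smul_comm, mul_one, smul_mul_assoc, he.1.eq]
    rw [hproj, smul_smul, Algebra.algebraMap_eq_smul_one, smul_smul,
      show (b + b) ^ 2 * b = 4 * b * b * b by ring]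
    exact smul_le_smul_of_nonneg_left he.le_one (by positivity)
  · set w₁ : A := (a - b) • e - (a + b) • (1 - e)
    set w₂ : A := (a - b) • e + (a + b) • (1 - e)
    have hf : IsSelfAdjoint (1 - e) := he.one_sub.isSelfAdjoint
    have hw₁ : IsSelfAdjoint w₁ :=
      ((IsSelfAdjoint.all _).smul he.2).sub ((IsSelfAdjoint.all _).smul hf)
    have hw₂ : IsSelfAdjoint w₂ :=
      ((IsSelfAdjoint.all _).smul he.2).add ((IsSelfAdjoint.all _).smul hf)
    have identity :
        b • (w₁ * (algebraMap ℝ A a - z) * w₁) + a • (w₂ * (z - algebraMap ℝ A b) * w₂) =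
          (a - b) • ((a + b) ^ 2 • z - (4 * a * b) • (e * z * e)) := by
      simp only [w₁, w₂, Algebra.algebraMap_eq_smul_one, sub_mul, mul_sub, add_mul, mul_add,
        smul_mul_assoc, mul_smul_comm, one_mul, mul_one, he.1.eq, smul_sub, smul_add, smul_smul]
      module
    have hscaled : 0 ≤ (a - b) • ((a + b) ^ 2 • z - (4 * a * b) • (e * z * e)) := by
      rw [← identity]
      exact add_nonneg (smul_nonneg hb (hw₁.conjugate_nonneg (sub_nonneg.2 hza)))
        (smul_nonneg (hb.trans hlt.le) (hw₂.conjugate_nonneg (sub_nonneg.2 hbz)))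
    rw [← sub_nonneg, ← inv_smul_smul₀ (sub_pos.2 hlt).ne' (_ - _)]
    exact smul_nonneg (inv_nonneg.2 (sub_pos.2 hlt).le) hscaled

end StarOrderedAlgebra

namespace Matrix.IsHermitian

variable {𝕜 m : Type*} [RCLike 𝕜] [Fintype m] [DecidableEq m] {M : Matrix m m 𝕜}
  (hM : M.IsHermitian) {r : ℝ}
include hM

theorem algebraMap_le_iff_le_eigenvalues :
    algebraMap ℝ _ r ≤ M ↔ ∀ i, r ≤ hM.eigenvalues i := by
  rw [algebraMap_le_iff_le_spectrum hM.isSelfAdjoint, hM.spectrum_real_eq_range_eigenvalues,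
    Set.forall_mem_range]

theorem le_algebraMap_iff_eigenvalues_le :
    M ≤ algebraMap ℝ _ r ↔ ∀ i, hM.eigenvalues i ≤ r := by
  rw [le_algebraMap_iff_spectrum_le hM.isSelfAdjoint, hM.spectrum_real_eq_range_eigenvalues,
    Set.forall_mem_range]

end Matrix.IsHermitian

theorem stmt_8_general (n : ℕ) (E Z : Matrix (Fin n) (Fin n) ℂ)
    (hE1 : E.conjTranspose = E) (hE2 : E * E = E) (hZ : Z.PosDef) (a b : ℝ)
    (ha : ∀ i, hZ.1.eigenvalues i ≤ a)
    (hb : ∀ i, b ≤ hZ.1.eigenvalues i) (hb' : ∃ i, hZ.1.eigenvalues i = b) :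
    (((a + b) ^ 2 / (4 * a * b) : ℝ) • Z - E * Z * E).PosSemidef := by
  obtain ⟨i, hi⟩ := hb'
  have hb0 : 0 < b := hi ▸ hZ.eigenvalues_pos i
  have hab : b ≤ a := (hb i).trans (ha i)
  have key := IsStarProjection.smul_mul_mul_le_smul ⟨hE2, hE1⟩ hb0.le hab
    (hZ.1.algebraMap_le_iff_le_eigenvalues.2 hb) (hZ.1.le_algebraMap_iff_eigenvalues_le.2 ha)
  have h4ab : 0 < 4 * a * b := mul_pos (mul_pos four_pos (hb0.trans_le hab)) hb0
  rw [← Matrix.nonneg_iff_posSemidef, sub_nonneg]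
  calc E * Z * E = (4 * a * b)⁻¹ • ((4 * a * b) • (E * Z * E)) :=
        (inv_smul_smul₀ h4ab.ne' _).symm
    _ ≤ (4 * a * b)⁻¹ • ((a + b) ^ 2 • Z) :=
        smul_le_smul_of_nonneg_left key (by positivity)
    _ = ((a + b) ^ 2 / (4 * a * b)) • Z := by rw [smul_smul, div_eq_inv_mul]

theorem stmt_8 (n : ℕ) (E Z : Matrix (Fin n) (Fin n) ℂ)
    (hE1 : E.conjTranspose = E) (hE2 : E * E = E) (hZ : Z.PosDef) (a b : ℝ)
    (ha : ∀ i, hZ.1.eigenvalues i ≤ a) (ha' : ∃ i, hZ.1.eigenvalues i = a)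
    (hb : ∀ i, b ≤ hZ.1.eigenvalues i) (hb' : ∃ i, hZ.1.eigenvalues i = b) :
    (((a + b) ^ 2 / (4 * a * b) : ℝ) • Z - E * Z * E).PosSemidef :=
  stmt_8_general n E Z hE1 hE2 hZ a b ha hb hb'
end

section
/- (Mond–Pečarić) Let Z be positive definite with extremal eigenvalues a ≥ b > 0, and let E be an orthogonal projection onto a subspace ℰ. Then, identifying compressions with operators on ℰ, (Z_ℰ)⁻¹ ≥ (4ab/(a+b)²) · (Z⁻¹)_ℰ, where X_ℰ denotes the compression EXE restricted to ℰ. -/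
/-!
Both sides of the inequality are controlled by scalar inequalities on spectra. Since the spectrum
of `Z` lies in `[b, a]`, `(a - t)(t - b)/t ≥ 0` gives `ab Z⁻¹ ≤ (a + b) - Z`, and compressing
yields `ab (Z⁻¹)_ℰ ≤ (a + b) - Z_ℰ`. On the other hand `(1 - ct)²/t ≥ 0` gives
`2c - c² Z_ℰ ≤ (Z_ℰ)⁻¹` for every real `c`. With `c = 2/(a + b)` the two combine to
`(4ab/(a + b)²) (Z⁻¹)_ℰ ≤ c² ((a + b) - Z_ℰ) = 2c - c² Z_ℰ ≤ (Z_ℰ)⁻¹`.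
-/

open scoped ComplexOrder MatrixOrder
open Matrix

namespace Matrix

variable {𝕜 m k : Type*} [RCLike 𝕜] [Fintype m] [Fintype k]

lemma conjTranspose_mul_mul_le_conjTranspose_mul_mul {A B : Matrix m m 𝕜} (h : A ≤ B)
    (V : Matrix m k 𝕜) : Vᴴ * A * V ≤ Vᴴ * B * V := by
  rw [Matrix.le_iff, ← Matrix.sub_mul, ← Matrix.mul_sub]
  exact (Matrix.le_iff.mp h).conjTranspose_mul_mul_same V

namespace PosDef

variable [DecidableEq m] {A : Matrix m m 𝕜}

lemma cfc_inv (hA : A.PosDef) : cfc (fun t : ℝ ↦ t⁻¹) A = A⁻¹ := by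
  rw [nonsing_inv_eq_ringInverse]
  exact cfc_ringInverse_id (a := A) hA.isUnit

lemma cfc_const_add_mul_add_mul_inv (hA : A.PosDef) (p q r : ℝ) :
    cfc (fun t ↦ p + q * t + r * t⁻¹) A =
      p • (1 : Matrix m m 𝕜) + q • A + r • A⁻¹ := by
  -- discharges the continuity side goals of `cfc_add` and `cfc_const_mul` for `t⁻¹`
  have hinv : ContinuousOn (fun t : ℝ ↦ t⁻¹) (spectrum ℝ A) :=
    continuousOn_inv₀.mono fun t ht ↦ (hA.isStrictlyPositive.spectrum_pos ht).ne'
  rw [cfc_add .., cfc_add .., cfc_const .., cfc_const_mul .., cfc_const_mul .., cfc_id' ..,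
    hA.cfc_inv, Algebra.algebraMap_eq_smul_one]

lemma smul_inv_le_of_spectrum_subset_Icc (hA : A.PosDef) {a b : ℝ}
    (h : spectrum ℝ A ⊆ Set.Icc b a) : (a * b) • A⁻¹ ≤ (a + b) • 1 - A := by
  have hcfc : (a + b) • 1 - A - (a * b) • A⁻¹ =
      cfc (fun t ↦ (a + b) + (-1) * t + (-(a * b)) * t⁻¹) A := by
    rw [hA.cfc_const_add_mul_add_mul_inv]
    module
  rw [← sub_nonneg, hcfc]
  refine cfc_nonneg fun t ht ↦ ?_
  obtain ⟨hbt, hta⟩ := h ht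
  have ht0 : 0 < t := hA.isStrictlyPositive.spectrum_pos ht
  have : (a + b) + (-1) * t + (-(a * b)) * t⁻¹ = (a - t) * (t - b) / t := by
    field_simp
    ring
  rw [this]
  exact div_nonneg (mul_nonneg (sub_nonneg.2 hta) (sub_nonneg.2 hbt)) ht0.le

lemma two_mul_smul_one_sub_sq_smul_le_inv (hA : A.PosDef) (c : ℝ) :
    (2 * c) • 1 - c ^ 2 • A ≤ A⁻¹ := by
  have hcfc : A⁻¹ - ((2 * c) • 1 - c ^ 2 • A) =
      cfc (fun t ↦ -(2 * c) + c ^ 2 * t + 1 * t⁻¹) A := by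
    rw [hA.cfc_const_add_mul_add_mul_inv]
    module
  rw [← sub_nonneg, hcfc]
  refine cfc_nonneg fun t ht ↦ ?_
  have ht0 : 0 < t := hA.isStrictlyPositive.spectrum_pos ht
  have : -(2 * c) + c ^ 2 * t + 1 * t⁻¹ = (1 - c * t) ^ 2 / t := by
    field_simp
    ring
  rw [this]
  positivity

end PosDef

end Matrix

/-- The subspace `ℰ` is represented by an isometry `V` whose columns
form an orthonormal basis of `ℰ`, so the compression `X_ℰ` is `Vᴴ * X * V`. -/
theorem stmt_10_general (n k : ℕ) (Z : Matrix (Fin n) (Fin n) ℂ) (hZ : Z.PosDef) (a b : ℝ)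
    (ha : ∀ i, hZ.1.eigenvalues i ≤ a)
    (hb : ∀ i, b ≤ hZ.1.eigenvalues i)
    (V : Matrix (Fin n) (Fin k) ℂ) (hV : Vᴴ * V = 1) :
    ((Vᴴ * Z * V)⁻¹ - (4 * a * b / (a + b) ^ 2 : ℝ) • (Vᴴ * Z⁻¹ * V)).PosSemidef := by
  have hV_inj : Function.Injective V.mulVec :=
    Function.LeftInverse.injective (g := (Vᴴ *ᵥ ·)) fun x ↦ by simp [mulVec_mulVec, hV]
  have hY : (Vᴴ * Z * V).PosDef := hZ.conjTranspose_mul_mul_same hV_inj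
  have hspec : spectrum ℝ Z ⊆ Set.Icc b a := by
    rw [hZ.1.spectrum_real_eq_range_eigenvalues]
    rintro _ ⟨i, rfl⟩
    exact ⟨hb i, ha i⟩
  have hcompr : (a * b) • (Vᴴ * Z⁻¹ * V) ≤ (a + b) • 1 - Vᴴ * Z * V := by
    simpa [Matrix.mul_sub, Matrix.sub_mul, Matrix.mul_assoc, hV] using
      conjTranspose_mul_mul_le_conjTranspose_mul_mul
        (hZ.smul_inv_le_of_spectrum_subset_Icc hspec) V
  set c := 2 / (a + b) with hc
  rw [← Matrix.le_iff]
  calc (4 * a * b / (a + b) ^ 2 : ℝ) • (Vᴴ * Z⁻¹ * V)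
        = c ^ 2 • ((a * b) • (Vᴴ * Z⁻¹ * V)) := by
        rw [smul_smul, hc, div_pow]
        congr 1
        ring
    _ ≤ c ^ 2 • ((a + b) • 1 - Vᴴ * Z * V) :=
        smul_le_smul_of_nonneg_left hcompr (sq_nonneg c)
    _ = (2 * c) • 1 - c ^ 2 • (Vᴴ * Z * V) := by
        rw [smul_sub, smul_smul, show c ^ 2 * (a + b) = 2 * c by grind]
    _ ≤ (Vᴴ * Z * V)⁻¹ := hY.two_mul_smul_one_sub_sq_smul_le_inv c

/-- Mond–Pečarić inequality. The subspace `ℰ` is represented by an isometry `V` whose columns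
form an orthonormal basis of `ℰ`, so the compression `X_ℰ` is `Vᴴ * X * V`. -/
theorem stmt_10 (n k : ℕ) (Z : Matrix (Fin n) (Fin n) ℂ) (hZ : Z.PosDef) (a b : ℝ)
    (ha : ∀ i, hZ.1.eigenvalues i ≤ a) (ha' : ∃ i, hZ.1.eigenvalues i = a)
    (hb : ∀ i, b ≤ hZ.1.eigenvalues i) (hb' : ∃ i, hZ.1.eigenvalues i = b)
    (V : Matrix (Fin n) (Fin k) ℂ) (hV : Vᴴ * V = 1) (hk : 0 < k) :
    ((Vᴴ * Z * V)⁻¹ - (4 * a * b / (a + b) ^ 2 : ℝ) • (Vᴴ * Z⁻¹ * V)).PosSemidef :=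
  stmt_10_general n k Z hZ a b ha hb V hV
end

section
/- Let Z be positive definite with extremal eigenvalues a ≥ b > 0, let ℰ be a subspace with compression Z_ℰ, and let 1 ≤ p ≤ 2. Then (Z_ℰ)^p ≥ (4ab/(a+b)²) · (Z^p)_ℰ in the Loewner order on ℰ. -/
/-!
On `[b, a]` the chord `ℓ` of `t ↦ t ^ p` satisfies `t ^ p ≤ ℓ t ≤ κ t ^ p` with the Kantorovich
constant `κ = (a + b)² / 4ab`: the first inequality is convexity, and the second interpolates
(Lyapunov's moment inequality) between `p = 1`, where `ℓ t = t`, and `p = 2`, where it is AM-GM.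
An affine function commutes with compression by an isometry, and the spectrum of `Z_ℰ` again lies
in `[b, a]`, so `κ⁻¹ (Z ^ p)_ℰ ≤ κ⁻¹ ℓ(Z)_ℰ = κ⁻¹ ℓ(Z_ℰ) ≤ (Z_ℰ) ^ p`.
-/

open scoped ComplexOrder MatrixOrder
open Matrix Set

noncomputable def kantorovich (a b : ℝ) : ℝ := (a + b) ^ 2 / (4 * a * b)

lemma one_le_kantorovich {a b : ℝ} (ha : 0 < a) (hb : 0 < b) : 1 ≤ kantorovich a b := by
  rw [kantorovich, one_le_div (by positivity)]
  nlinarith [sq_nonneg (a - b)]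

lemma weighted_rpow_one_add_le_mul_rpow {x y θ l : ℝ} (hx : 0 < x) (hy : 0 < y) (hθ₀ : 0 ≤ θ)
    (hθ₁ : θ ≤ 1) (hl₀ : 0 ≤ l) (hl₁ : l ≤ 1) :
    θ * x ^ (1 + l) + (1 - θ) * y ^ (1 + l) ≤
      (θ * x + (1 - θ) * y) ^ (1 - l) * (θ * x ^ 2 + (1 - θ) * y ^ 2) ^ l := by
  set t := θ * x + (1 - θ) * y
  have ht : 0 < t := by
    rcases hθ₀.eq_or_lt with rfl | hθ
    · simpa [t] using hy
    · nlinarith [mul_pos hθ hx]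
  -- Jensen for the concave `u ↦ u ^ l`, with the weights `θ x / t` and `(1 - θ) y / t`
  have jensen := (Real.concaveOn_rpow hl₀ hl₁).2 (mem_Ici.2 hx.le) (mem_Ici.2 hy.le)
    (div_nonneg (mul_nonneg hθ₀ hx.le) ht.le)
    (div_nonneg (mul_nonneg (sub_nonneg.2 hθ₁) hy.le) ht.le) (by field_simp; rfl)
  simp only [smul_eq_mul] at jensen
  calc θ * x ^ (1 + l) + (1 - θ) * y ^ (1 + l)
      = t * (θ * x / t * x ^ l + (1 - θ) * y / t * y ^ l) := by
        rw [Real.rpow_add hx, Real.rpow_add hy, Real.rpow_one, Real.rpow_one]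
        field_simp
    _ ≤ t * (θ * x / t * x + (1 - θ) * y / t * y) ^ l := by gcongr
    _ = t ^ (1 - l) * (θ * x ^ 2 + (1 - θ) * y ^ 2) ^ l := by
        rw [show θ * x / t * x + (1 - θ) * y / t * y = (θ * x ^ 2 + (1 - θ) * y ^ 2) / t by
          field_simp, Real.div_rpow (by positivity) ht.le, Real.rpow_sub ht, Real.rpow_one]
        field_simp

lemma weighted_rpow_le_kantorovich_mul_rpow {a b θ p : ℝ} (hb : 0 < b) (hba : b ≤ a)
    (hθ₀ : 0 ≤ θ) (hθ₁ : θ ≤ 1) (hp₁ : 1 ≤ p) (hp₂ : p ≤ 2) :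
    θ * b ^ p + (1 - θ) * a ^ p ≤ kantorovich a b * (θ * b + (1 - θ) * a) ^ p := by
  have ha : 0 < a := hb.trans_le hba
  set C := kantorovich a b
  set t := θ * b + (1 - θ) * a
  have ht : 0 < t := by nlinarith
  have hC : 1 ≤ C := one_le_kantorovich ha hb
  obtain ⟨l, rfl⟩ : ∃ l, p = 1 + l := ⟨p - 1, by ring⟩
  have second_moment : θ * b ^ 2 + (1 - θ) * a ^ 2 ≤ C * t ^ 2 := by
    rw [show C = (a + b) ^ 2 / (4 * a * b) from rfl, div_mul_eq_mul_div,
      le_div_iff₀ (by positivity)]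
    nlinarith [sq_nonneg ((a + b) * t - 2 * a * b)]
  calc θ * b ^ (1 + l) + (1 - θ) * a ^ (1 + l)
      ≤ t ^ (1 - l) * (θ * b ^ 2 + (1 - θ) * a ^ 2) ^ l :=
        weighted_rpow_one_add_le_mul_rpow hb ha hθ₀ hθ₁ (by linarith) (by linarith)
    _ ≤ t ^ (1 - l) * (C * t ^ 2) ^ l := by gcongr; nlinarith
    _ = C ^ l * t ^ (1 + l) := by
        rw [Real.mul_rpow (by positivity) (by positivity), ← Real.rpow_natCast,
          ← Real.rpow_mul ht.le, mul_left_comm, ← Real.rpow_add ht]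
        ring_nf
    _ ≤ C * t ^ (1 + l) := by
        gcongr
        exact Real.rpow_le_self_of_one_le hC (by linarith)

lemma exists_affine_between_rpow {a b p : ℝ} (hb : 0 < b) (hba : b ≤ a) (hp₁ : 1 ≤ p)
    (hp₂ : p ≤ 2) :
    ∃ r s : ℝ, ∀ t ∈ Icc b a,
      t ^ p ≤ r * t + s ∧ 4 * a * b / (a + b) ^ 2 * (r * t + s) ≤ t ^ p := by
  have ha : 0 < a := hb.trans_le hba
  have hK : 4 * a * b / (a + b) ^ 2 = (kantorovich a b)⁻¹ := (inv_div _ _).symm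
  rcases hba.eq_or_lt with rfl | hlt
  · refine ⟨0, b ^ p, fun t ht => ?_⟩
    obtain rfl : t = b := le_antisymm ht.2 ht.1
    rw [zero_mul, zero_add, hK]
    exact ⟨le_rfl, mul_le_of_le_one_left (by positivity)
      (inv_le_one_of_one_le₀ (one_le_kantorovich hb hb))⟩
  refine ⟨(a ^ p - b ^ p) / (a - b), (a * b ^ p - b * a ^ p) / (a - b), fun t ht => ?_⟩
  set θ := (a - t) / (a - b) with hθ
  have hab : 0 < a - b := sub_pos.2 hlt
  have hθ₀ : 0 ≤ θ := div_nonneg (by linarith [ht.2]) hab.le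
  have hθ₁ : θ ≤ 1 := (div_le_one hab).2 (by linarith [ht.1])
  have ht_eq : t = θ * b + (1 - θ) * a := by rw [hθ]; field_simp; ring
  have hchord : (a ^ p - b ^ p) / (a - b) * t + (a * b ^ p - b * a ^ p) / (a - b) =
      θ * b ^ p + (1 - θ) * a ^ p := by rw [hθ]; field_simp; ring
  rw [hchord]
  constructor
  · simpa [ht_eq, smul_eq_mul] using (convexOn_rpow hp₁).2 (mem_Ici.2 hb.le)
      (mem_Ici.2 ha.le) hθ₀ (sub_nonneg.2 hθ₁) (by ring)
  · rw [hK, inv_mul_le_iff₀ (lt_of_lt_of_le one_pos (one_le_kantorovich ha hb)), ht_eq]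
    exact weighted_rpow_le_kantorovich_mul_rpow hb hba hθ₀ hθ₁ hp₁ hp₂

section CFC

variable {A : Type*} [Ring A] [StarRing A] [TopologicalSpace A] [Algebra ℝ A]
  [ContinuousFunctionalCalculus ℝ A IsSelfAdjoint]

lemma cfc_affine {x : A} (hx : IsSelfAdjoint x) (r s : ℝ) :
    cfc (fun t => r * t + s) x = r • x + algebraMap ℝ A s := by
  rw [cfc_add .., cfc_const_mul .., cfc_id' ℝ x, cfc_const s x]

lemma spectrum_subset_Icc_iff [PartialOrder A] [StarOrderedRing A] [NonnegSpectrumClass ℝ A]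
    {x : A} (hx : IsSelfAdjoint x) {b a : ℝ} :
    spectrum ℝ x ⊆ Icc b a ↔ algebraMap ℝ A b ≤ x ∧ x ≤ algebraMap ℝ A a := by
  rw [algebraMap_le_iff_le_spectrum hx, le_algebraMap_iff_spectrum_le hx]
  exact ⟨fun h => ⟨fun t ht => (h ht).1, fun t ht => (h ht).2⟩,
    fun h t ht => ⟨h.1 t ht, h.2 t ht⟩⟩

end CFC

namespace Matrix

variable {𝕜 m k : Type*} [RCLike 𝕜] [Fintype m] [Fintype k]

lemma conjTranspose_mul_mul_mono (V : Matrix m k 𝕜) {A B : Matrix m m 𝕜} (h : A ≤ B) :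
    Vᴴ * A * V ≤ Vᴴ * B * V := by
  rw [le_iff, ← Matrix.sub_mul, ← Matrix.mul_sub]
  exact (le_iff.1 h).conjTranspose_mul_mul_same V

variable [DecidableEq m] [DecidableEq k]

lemma conjTranspose_mul_algebraMap_mul {V : Matrix m k 𝕜} (hV : Vᴴ * V = 1) (r : ℝ) :
    Vᴴ * algebraMap ℝ (Matrix m m 𝕜) r * V = algebraMap ℝ (Matrix k k 𝕜) r := by
  rw [Algebra.algebraMap_eq_smul_one, Algebra.algebraMap_eq_smul_one, Matrix.mul_smul,
    Matrix.mul_one, Matrix.smul_mul, hV]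

lemma spectrum_conjTranspose_mul_mul_subset {Z : Matrix m m 𝕜} (hZ : Z.IsHermitian)
    {V : Matrix m k 𝕜} (hV : Vᴴ * V = 1) {b a : ℝ} (h : spectrum ℝ Z ⊆ Icc b a) :
    spectrum ℝ (Vᴴ * Z * V) ⊆ Icc b a := by
  rw [spectrum_subset_Icc_iff hZ.isSelfAdjoint] at h
  rw [spectrum_subset_Icc_iff (isHermitian_conjTranspose_mul_mul V hZ).isSelfAdjoint,
    ← conjTranspose_mul_algebraMap_mul hV, ← conjTranspose_mul_algebraMap_mul hV]
  exact ⟨conjTranspose_mul_mul_mono V h.1, conjTranspose_mul_mul_mono V h.2⟩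

lemma smul_conjTranspose_mul_cfc_mul_le_cfc {Z : Matrix m m 𝕜} (hZ : Z.IsHermitian)
    {V : Matrix m k 𝕜} (hV : Vᴴ * V = 1) {a b c r s : ℝ} (hc : 0 ≤ c)
    (hspec : spectrum ℝ Z ⊆ Icc b a) {f g : ℝ → ℝ} (hf : ∀ t ∈ Icc b a, f t ≤ r * t + s)
    (hg : ∀ t ∈ Icc b a, c * (r * t + s) ≤ g t) :
    c • (Vᴴ * cfc f Z * V) ≤ cfc g (Vᴴ * Z * V) := by
  have hY := isHermitian_conjTranspose_mul_mul V hZ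
  calc c • (Vᴴ * cfc f Z * V) ≤ c • (Vᴴ * cfc (fun t => r * t + s) Z * V) := by
        refine smul_le_smul_of_nonneg_left (conjTranspose_mul_mul_mono V ?_) hc
        exact cfc_mono (fun t ht => hf t (hspec ht))
          (Z.finite_real_spectrum.continuousOn _) (Z.finite_real_spectrum.continuousOn _)
    _ = cfc (fun t => c * r * t + c * s) (Vᴴ * Z * V) := by
        rw [cfc_affine hZ.isSelfAdjoint, cfc_affine hY.isSelfAdjoint, Matrix.mul_add,
          Matrix.add_mul, Matrix.mul_smul, Matrix.smul_mul, conjTranspose_mul_algebraMap_mul hV,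
          smul_add, smul_smul, Algebra.algebraMap_eq_smul_one, Algebra.algebraMap_eq_smul_one,
          smul_smul]
    _ ≤ cfc g (Vᴴ * Z * V) := by
        refine cfc_mono (fun t ht => ?_) ((Vᴴ * Z * V).finite_real_spectrum.continuousOn _)
          ((Vᴴ * Z * V).finite_real_spectrum.continuousOn _)
        have := hg t (spectrum_conjTranspose_mul_mul_subset hZ hV hspec ht)
        linarith

end Matrix

theorem stmt_11_general (n k : ℕ) (Z : Matrix (Fin n) (Fin n) ℂ) (hZ : Z.PosDef) (a b : ℝ)
    (ha : ∀ i, hZ.1.eigenvalues i ≤ a)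
    (hb : ∀ i, b ≤ hZ.1.eigenvalues i) (hb' : ∃ i, hZ.1.eigenvalues i = b)
    (V : Matrix (Fin n) (Fin k) ℂ) (hV : Vᴴ * V = 1)
    (p : ℝ) (hp1 : 1 ≤ p) (hp2 : p ≤ 2) :
    ((Matrix.isHermitian_conjTranspose_mul_mul V hZ.1).cfc (fun x : ℝ => x ^ p) -
      (4 * a * b / (a + b) ^ 2 : ℝ) • (Vᴴ * hZ.1.cfc (fun x : ℝ => x ^ p) * V)).PosSemidef := by
  obtain ⟨i, hi⟩ := hb'
  have hb₀ : 0 < b := hi ▸ hZ.eigenvalues_pos i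
  have hba : b ≤ a := hi ▸ ha i
  have ha₀ : 0 < a := hb₀.trans_le hba
  obtain ⟨r, s, hrs⟩ := exists_affine_between_rpow hb₀ hba hp1 hp2
  have hspec : spectrum ℝ Z ⊆ Icc b a := by
    rw [hZ.1.spectrum_real_eq_range_eigenvalues]
    rintro _ ⟨j, rfl⟩
    exact ⟨hb j, ha j⟩
  rw [← le_iff, ← IsHermitian.cfc_eq, ← IsHermitian.cfc_eq]
  exact smul_conjTranspose_mul_cfc_mul_le_cfc hZ.1 hV (by positivity) hspec
    (fun t ht => (hrs t ht).1) (fun t ht => (hrs t ht).2)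

/-- The subspace `ℰ` is represented by an isometry `V` whose columns form an orthonormal basis
of `ℰ`, so the compression `X_ℰ` is `Vᴴ * X * V`; real powers of positive matrices are taken
via the functional calculus for Hermitian matrices. -/
theorem stmt_11 (n k : ℕ) (Z : Matrix (Fin n) (Fin n) ℂ) (hZ : Z.PosDef) (a b : ℝ)
    (ha : ∀ i, hZ.1.eigenvalues i ≤ a) (ha' : ∃ i, hZ.1.eigenvalues i = a)
    (hb : ∀ i, b ≤ hZ.1.eigenvalues i) (hb' : ∃ i, hZ.1.eigenvalues i = b)
    (V : Matrix (Fin n) (Fin k) ℂ) (hV : Vᴴ * V = 1) (hk : 0 < k)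
    (p : ℝ) (hp1 : 1 ≤ p) (hp2 : p ≤ 2) :
    ((Matrix.isHermitian_conjTranspose_mul_mul V hZ.1).cfc (fun x : ℝ => x ^ p) -
      (4 * a * b / (a + b) ^ 2 : ℝ) • (Vᴴ * hZ.1.cfc (fun x : ℝ => x ^ p) * V)).PosSemidef :=
  stmt_11_general n k Z hZ a b ha hb hb' V hV p hp1 hp2
end

section
/- Let Z be positive definite with extremal eigenvalues a ≥ b > 0, and let ℰ be a subspace. Then (Z_ℰ)² ≥ (4ab/(a+b)²) · (Z²)_ℰ in the Loewner order on ℰ. -/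
/-!
With `C = Vᴴ Z V`, `c = 4ab/(a+b)²` and `t = 2ab/(a+b)` one has the identity
`C² - c Vᴴ Z² V = (C - t)² + c Vᴴ ((a+b) Z - ab - Z²) V`, and both terms on the right are
positive semidefinite: the first is a Hermitian square, and `(a+b) Z - ab - Z² = (a - Z)(Z - b)`
is a nonnegative function of `Z` because the spectrum of `Z` lies in `[b, a]`.
-/

open scoped ComplexOrder MatrixOrder
open Matrix

variable {𝕜 n m : Type*} [RCLike 𝕜] [Fintype n] [DecidableEq n] [Fintype m] [DecidableEq m]

theorem Matrix.smul_le_sq_of_le {C M : Matrix m m 𝕜} (hC : C.IsHermitian) {a b : ℝ}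
    (hab : 0 ≤ a * b) (hab' : a + b ≠ 0) (h : M ≤ (a + b) • C - (a * b) • 1) :
    (4 * a * b / (a + b) ^ 2) • M ≤ C ^ 2 := by
  have hc : 0 ≤ 4 * a * b / (a + b) ^ 2 := div_nonneg (by linarith) (sq_nonneg _)
  have e1 : 4 * a * b / (a + b) ^ 2 * (a + b) = 2 * (2 * a * b / (a + b)) := by field_simp; ring
  have e2 : 4 * a * b / (a + b) ^ 2 * (a * b) = (2 * a * b / (a + b)) ^ 2 := by field_simp; ring
  have hsplit : C ^ 2 - (4 * a * b / (a + b) ^ 2) • M = (C - (2 * a * b / (a + b)) • 1) ^ 2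
      + (4 * a * b / (a + b) ^ 2) • ((a + b) • C - (a * b) • 1 - M) := by
    rw [smul_sub, smul_sub, smul_smul, smul_smul, e1, e2, sq (C - _), sq C]
    simp only [sub_mul, mul_sub, smul_mul_assoc, mul_smul_comm, one_mul, mul_one]
    module
  rw [← sub_nonneg, hsplit]
  exact add_nonneg (hC.isSelfAdjoint.sub (.smul (.all _) (.one _))).sq_nonneg
    (smul_nonneg hc (sub_nonneg.2 h))

theorem Matrix.IsHermitian.sq_le_of_eigenvalues_mem_Icc {Z : Matrix n n 𝕜} (hZ : Z.IsHermitian)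
    {a b : ℝ} (ha : ∀ i, hZ.eigenvalues i ≤ a) (hb : ∀ i, b ≤ hZ.eigenvalues i) :
    Z ^ 2 ≤ (a + b) • Z - (a * b) • 1 := by
  have hf : ∀ x ∈ spectrum ℝ Z, 0 ≤ (a + b) * x - a * b - x ^ 2 := by
    rw [hZ.spectrum_real_eq_range_eigenvalues]
    rintro _ ⟨i, rfl⟩
    nlinarith [ha i, hb i]
  have h := cfc_nonneg hf
  rwa [cfc_sub _ _ Z, cfc_sub _ _ Z, cfc_const_mul _ _ Z, cfc_id' ℝ Z, cfc_const _ Z, cfc_pow_id Z,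
    Algebra.algebraMap_eq_smul_one, sub_nonneg] at h

theorem Matrix.IsHermitian.conjTranspose_mul_sq_mul_le {Z : Matrix n n 𝕜} (hZ : Z.IsHermitian)
    {a b : ℝ} (ha : ∀ i, hZ.eigenvalues i ≤ a) (hb : ∀ i, b ≤ hZ.eigenvalues i)
    {V : Matrix n m 𝕜} (hV : Vᴴ * V = 1) :
    Vᴴ * Z ^ 2 * V ≤ (a + b) • (Vᴴ * Z * V) - (a * b) • 1 := by
  have h := (le_iff.1 (hZ.sq_le_of_eigenvalues_mem_Icc ha hb)).conjTranspose_mul_mul_same V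
  rw [le_iff]
  convert h using 1
  simp only [Matrix.mul_sub, Matrix.sub_mul, Matrix.mul_smul, Matrix.smul_mul, Matrix.mul_one, hV]

theorem stmt_12_general (n k : ℕ) (Z : Matrix (Fin n) (Fin n) ℂ) (hZ : Z.PosDef) (a b : ℝ)
    (ha : ∀ i, hZ.1.eigenvalues i ≤ a)
    (hb : ∀ i, b ≤ hZ.1.eigenvalues i) (hb' : ∃ i, hZ.1.eigenvalues i = b)
    (V : Matrix (Fin n) (Fin k) ℂ) (hV : Vᴴ * V = 1) :
    ((Vᴴ * Z * V) ^ 2 - (4 * a * b / (a + b) ^ 2 : ℝ) • (Vᴴ * Z ^ 2 * V)).PosSemidef := by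
  obtain ⟨i, hi⟩ := hb'
  have hb0 : 0 < b := hi ▸ hZ.eigenvalues_pos i
  have hba : b ≤ a := hi ▸ ha i
  exact smul_le_sq_of_le (hZ.posSemidef.conjTranspose_mul_mul_same V).isHermitian
    (mul_pos (hb0.trans_le hba) hb0).le (by linarith)
    (hZ.isHermitian.conjTranspose_mul_sq_mul_le ha hb hV)

/-- The subspace `ℰ` is represented by an isometry `V` whose columns form an orthonormal basis
of `ℰ`, so the compression `X_ℰ` is `Vᴴ * X * V`. -/
theorem stmt_12 (n k : ℕ) (Z : Matrix (Fin n) (Fin n) ℂ) (hZ : Z.PosDef) (a b : ℝ)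
    (ha : ∀ i, hZ.1.eigenvalues i ≤ a) (ha' : ∃ i, hZ.1.eigenvalues i = a)
    (hb : ∀ i, b ≤ hZ.1.eigenvalues i) (hb' : ∃ i, hZ.1.eigenvalues i = b)
    (V : Matrix (Fin n) (Fin k) ℂ) (hV : Vᴴ * V = 1) (hk : 0 < k) :
    ((Vᴴ * Z * V) ^ 2 - (4 * a * b / (a + b) ^ 2 : ℝ) • (Vᴴ * Z ^ 2 * V)).PosSemidef :=
  stmt_12_general n k Z hZ a b ha hb hb' V hV
end

section
/- Let Z be positive definite with extremal eigenvalues a ≥ b > 0 and let E be a rank-one orthogonal projection h⊗h for a unit vector h. Then the operator norm of Z^{-1/2} E Z E Z^{-1/2} is at most (a+b)²/(4ab). -/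
/-!
Write `S = Z^{-1/2}` and `E = |h⟩⟨h|`. Then `E Z E = ⟨h, Z h⟩ E`, so the operator is the rank-one
map `⟨h, Z h⟩ |S h⟩⟨S h|`, whose norm is `⟨h, Z h⟩ ‖S h‖² = ⟨h, Z h⟩ ⟨h, Z⁻¹ h⟩`. As the spectrum
of `Z` lies in `[b, a]`, `(Z - a)(Z - b) Z⁻¹ ≤ 0`, i.e. `Z + ab Z⁻¹ ≤ a + b`. Evaluating at `h` and
applying AM-GM to `⟨h, Z h⟩` and `ab ⟨h, Z⁻¹ h⟩` gives the Kantorovich bound `(a + b)² / (4ab)`.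
-/

open scoped ComplexOrder InnerProductSpace
open InnerProductSpace

lemma mul_le_of_add_mul_mul_le {a b x y : ℝ} (hb : 0 < b) (hba : b ≤ a) (hx : 0 ≤ x) (hy : 0 ≤ y)
    (hxy : x + a * b * y ≤ a + b) : x * y ≤ (a + b) ^ 2 / (4 * a * b) := by
  have ha : 0 < a := hb.trans_le hba
  have hsq : (x + a * b * y) ^ 2 ≤ (a + b) ^ 2 := pow_le_pow_left₀ (by positivity) hxy 2
  rw [le_div_iff₀ (by positivity)]
  nlinarith [sq_nonneg (x - a * b * y)]

namespace ContinuousLinearMap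

variable {H : Type*} [NormedAddCommGroup H] [InnerProductSpace ℂ H]

lemma re_inner_apply_le_of_le {A B : H →L[ℂ] H} (hAB : A ≤ B) (x : H) :
    (⟪x, A x⟫_ℂ).re ≤ (⟪x, B x⟫_ℂ).re := by
  have := ((le_def A B).mp hAB).re_inner_nonneg_right x
  rwa [_root_.sub_apply, inner_sub_right, map_sub, sub_nonneg] at this

lemma norm_inner_apply_of_nonneg {A : H →L[ℂ] H} (hA : 0 ≤ A) (x : H) :
    ‖⟪x, A x⟫_ℂ‖ = (⟪x, A x⟫_ℂ).re :=
  (Complex.re_eq_norm.mpr (((nonneg_iff_isPositive A).mp hA).inner_nonneg_right x)).symm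

variable [CompleteSpace H]

lemma norm_apply_mul_self_of_isSelfAdjoint {S : H →L[ℂ] H} (hS : IsSelfAdjoint S) (x : H) :
    ‖S x‖ * ‖S x‖ = (⟪x, (S * S) x⟫_ℂ).re := by
  rw [← inner_self_eq_norm_mul_norm (𝕜 := ℂ), ← adjoint_inner_right, hS.adjoint_eq]
  rfl

lemma mul_rankOne_mul_mul_rankOne_mul {S : H →L[ℂ] H} (hS : IsSelfAdjoint S) (T : H →L[ℂ] H)
    (x : H) : S * rankOne ℂ x x * T * rankOne ℂ x x * S = ⟪x, T x⟫_ℂ • rankOne ℂ (S x) (S x) := by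
  simp [mul_def, comp_rankOne, rankOne_comp, hS.adjoint_eq, adjoint_inner_left]

variable {T : H →L[ℂ] H} {a b : ℝ}

lemma cfc_rpow_neg_half_mul_self (hspec : ∀ t ∈ spectrum ℝ T, 0 < t) :
    cfc (fun t : ℝ => t ^ (-(1 / 2) : ℝ)) T * cfc (fun t : ℝ => t ^ (-(1 / 2) : ℝ)) T =
      cfc (·⁻¹ : ℝ → ℝ) T := by
  have hcont : ContinuousOn (fun t : ℝ => t ^ (-(1 / 2) : ℝ)) (spectrum ℝ T) :=
    continuousOn_id.rpow_const fun t ht => Or.inl (hspec t ht).ne'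
  rw [← cfc_mul ..]
  refine cfc_congr fun t ht => ?_
  rw [← Real.rpow_add (hspec t ht)]
  norm_num [Real.rpow_neg_one]

lemma add_smul_cfc_inv_le (hT : IsSelfAdjoint T) (hspec : spectrum ℝ T ⊆ Set.Icc b a)
    (hb : 0 < b) : T + (a * b) • cfc (·⁻¹ : ℝ → ℝ) T ≤ algebraMap ℝ _ (a + b) := by
  have hinv : ContinuousOn (·⁻¹ : ℝ → ℝ) (spectrum ℝ T) :=
    continuousOn_inv₀.mono fun t ht => (hb.trans_le (hspec ht).1).ne'
  calc T + (a * b) • cfc (·⁻¹ : ℝ → ℝ) T = cfc (fun t : ℝ => t + a * b * t⁻¹) T := by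
        rw [cfc_add .., cfc_id' .., cfc_const_mul ..]
    _ ≤ cfc (fun _ : ℝ => a + b) T := cfc_mono fun t ht => ?_
    _ = algebraMap ℝ _ (a + b) := cfc_const ..
  obtain ⟨hbt, hta⟩ := hspec ht
  have ht : 0 < t := hb.trans_le hbt
  have : a + b - (t + a * b * t⁻¹) = (a - t) * (t - b) / t := by field_simp; ring
  rw [← sub_nonneg, this]
  exact div_nonneg (mul_nonneg (by linarith) (by linarith)) ht.le

theorem re_inner_mul_re_inner_cfc_inv_le (hT : IsSelfAdjoint T)
    (hspec : spectrum ℝ T ⊆ Set.Icc b a) (hb : 0 < b) (hba : b ≤ a) {x : H} (hx : ‖x‖ = 1) :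
    (⟪x, T x⟫_ℂ).re * (⟪x, cfc (·⁻¹ : ℝ → ℝ) T x⟫_ℂ).re ≤ (a + b) ^ 2 / (4 * a * b) := by
  have hT0 : 0 ≤ T :=
    (StarOrderedRing.nonneg_iff_spectrum_nonneg T).mpr fun t ht => hb.le.trans (hspec ht).1
  have hinv0 : 0 ≤ cfc (·⁻¹ : ℝ → ℝ) T :=
    cfc_nonneg fun t ht => inv_nonneg.mpr (hb.le.trans (hspec ht).1)
  refine mul_le_of_add_mul_mul_le hb hba ?_ ?_ ?_
  · simpa using re_inner_apply_le_of_le hT0 x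
  · simpa using re_inner_apply_le_of_le hinv0 x
  · simpa [Algebra.algebraMap_eq_smul_one, hx, inner_add_right, inner_smul_right] using
      re_inner_apply_le_of_le (add_smul_cfc_inv_le hT hspec hb) x

theorem norm_cfc_mul_rankOne_mul_mul_rankOne_mul_cfc_le (hT : IsSelfAdjoint T)
    (hspec : spectrum ℝ T ⊆ Set.Icc b a) (hb : 0 < b) (hba : b ≤ a) {x : H} (hx : ‖x‖ = 1) :
    ‖cfc (fun t : ℝ => t ^ (-(1 / 2) : ℝ)) T * rankOne ℂ x x * T * rankOne ℂ x x *
        cfc (fun t : ℝ => t ^ (-(1 / 2) : ℝ)) T‖ ≤ (a + b) ^ 2 / (4 * a * b) := by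
  have hT0 : 0 ≤ T :=
    (StarOrderedRing.nonneg_iff_spectrum_nonneg T).mpr fun t ht => hb.le.trans (hspec ht).1
  have hS : IsSelfAdjoint (cfc (fun t : ℝ => t ^ (-(1 / 2) : ℝ)) T) := cfc_predicate ..
  rw [mul_rankOne_mul_mul_rankOne_mul hS, norm_smul, norm_rankOne, norm_inner_apply_of_nonneg hT0,
    norm_apply_mul_self_of_isSelfAdjoint hS,
    cfc_rpow_neg_half_mul_self fun t ht => hb.trans_le (hspec ht).1]
  exact re_inner_mul_re_inner_cfc_inv_le hT hspec hb hba hx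

end ContinuousLinearMap

namespace Matrix

variable {n : Type*} [Fintype n] [DecidableEq n]

lemma toEuclideanCLM_of_mul_star (x : EuclideanSpace ℂ n) :
    toEuclideanCLM (𝕜 := ℂ) (of fun i j => x i * star (x j)) = rankOne ℂ x x := by
  apply ContinuousLinearMap.coe_injective
  rw [coe_toEuclideanCLM_eq_toEuclideanLin, ← LinearEquiv.eq_symm_apply,
    symm_toEuclideanLin_rankOne]
  rfl

lemma spectrum_toEuclideanCLM (A : Matrix n n ℂ) :
    spectrum ℝ (toEuclideanCLM (𝕜 := ℂ) A) = spectrum ℝ A := by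
  rw [← spectrum.preimage_algebraMap ℂ, ← spectrum.preimage_algebraMap ℂ (a := A),
    AlgEquiv.spectrum_eq]

lemma IsHermitian.toEuclideanCLM_cfc {A : Matrix n n ℂ} (hA : A.IsHermitian) (f : ℝ → ℝ) :
    toEuclideanCLM (𝕜 := ℂ) (hA.cfc f) = cfc f (toEuclideanCLM (𝕜 := ℂ) A) := by
  have hfin : (spectrum ℝ A).Finite := hA.spectrum_real_eq_range_eigenvalues ▸ Set.finite_range _
  have hcont : Continuous (toEuclideanCLM (𝕜 := ℂ) (n := n)) :=
    (toEuclideanCLM (𝕜 := ℂ) (n := n)).toAlgEquiv.toLinearMap.continuous_of_finiteDimensional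
  rw [← hA.cfc_eq, StarAlgHomClass.map_cfc (S := ℂ) toEuclideanCLM f A (hfin.continuousOn f) hcont]

end Matrix

open Matrix

theorem stmt_17_general (n : ℕ) (Z : Matrix (Fin n) (Fin n) ℂ) (hZ : Z.PosDef) (a b : ℝ)
    (ha : ∀ i, hZ.1.eigenvalues i ≤ a)
    (hb : ∀ i, b ≤ hZ.1.eigenvalues i) (hb' : ∃ i, hZ.1.eigenvalues i = b)
    (h : EuclideanSpace ℂ (Fin n)) (hh : ‖h‖ = 1)
    (E : Matrix (Fin n) (Fin n) ℂ) (hE : E = Matrix.of fun i j => h i * star (h j)) :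
    ‖Matrix.toEuclideanCLM (𝕜 := ℂ)
        (hZ.1.cfc (fun x : ℝ => x ^ (-(1 / 2) : ℝ)) * E * Z * E *
          hZ.1.cfc (fun x : ℝ => x ^ (-(1 / 2) : ℝ)))‖ ≤
      (a + b) ^ 2 / (4 * a * b) := by
  obtain ⟨i, hi⟩ := hb'
  have hb0 : 0 < b := hi ▸ hZ.eigenvalues_pos i
  have hba : b ≤ a := hi ▸ ha i
  have hspec : spectrum ℝ (toEuclideanCLM (𝕜 := ℂ) Z) ⊆ Set.Icc b a := by
    rw [spectrum_toEuclideanCLM, hZ.1.spectrum_real_eq_range_eigenvalues]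
    rintro _ ⟨j, rfl⟩
    exact ⟨hb j, ha j⟩
  have hT : IsSelfAdjoint (toEuclideanCLM (𝕜 := ℂ) Z) := hZ.1.isSelfAdjoint.map _
  subst hE
  simpa only [map_mul, hZ.1.toEuclideanCLM_cfc, toEuclideanCLM_of_mul_star] using
    ContinuousLinearMap.norm_cfc_mul_rankOne_mul_mul_rankOne_mul_cfc_le hT hspec hb0 hba hh

theorem stmt_17 (n : ℕ) (Z : Matrix (Fin n) (Fin n) ℂ) (hZ : Z.PosDef) (a b : ℝ)
    (ha : ∀ i, hZ.1.eigenvalues i ≤ a) (ha' : ∃ i, hZ.1.eigenvalues i = a)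
    (hb : ∀ i, b ≤ hZ.1.eigenvalues i) (hb' : ∃ i, hZ.1.eigenvalues i = b)
    (h : EuclideanSpace ℂ (Fin n)) (hh : ‖h‖ = 1)
    (E : Matrix (Fin n) (Fin n) ℂ) (hE : E = Matrix.of fun i j => h i * star (h j)) :
    ‖Matrix.toEuclideanCLM (𝕜 := ℂ)
        (hZ.1.cfc (fun x : ℝ => x ^ (-(1 / 2) : ℝ)) * E * Z * E *
          hZ.1.cfc (fun x : ℝ => x ^ (-(1 / 2) : ℝ)))‖ ≤
      (a + b) ^ 2 / (4 * a * b) :=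
  stmt_17_general n Z hZ a b ha hb hb' h hh E hE
end

section
/- Let A be Hermitian with 0 ≤ A ≤ I and Z positive definite with extremal eigenvalues a ≥ b > 0. Then the operator norm of Z^{-1/2} A Z^{1/2} is at most (a+b)/(2√(ab)). -/
/-!
Write `P = Z^{1/2}`, `N = Z^{-1/2}`, `X = N A P` and `S = N A N`. Since `x + ab/x ≤ a + b` on
`[b, a]`, the functional calculus gives `P² + ab N² ≤ a + b`. Conjugating by `A N` and using
`A² ≤ A` yields `X X* = N A P² A N ≤ (a + b) S - ab S²`, and completing the square in the
self-adjoint `S` bounds this by `((a + b) / (2√(ab)))²`; finally `‖X‖² = ‖X X*‖`.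
-/

open scoped ComplexOrder
open Matrix Set

lemma add_mul_inv_le_add_of_mem_Icc {a b x : ℝ} (hb : 0 < b) (hx : x ∈ Icc b a) :
    x + a * b * x⁻¹ ≤ a + b := by
  have hx0 : 0 < x := hb.trans_le hx.1
  have key : a + b - (x + a * b * x⁻¹) = (a - x) * (x - b) / x := by
    field_simp
    ring
  rw [← sub_nonneg, key]
  exact div_nonneg (mul_nonneg (sub_nonneg.2 hx.2) (sub_nonneg.2 hx.1)) hx0.le

section CStarAlgebra

variable {A : Type*} [CStarAlgebra A] [PartialOrder A] [StarOrderedRing A]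

lemma mul_self_le_self_of_nonneg_of_le_one_s18 {T : A} (hT0 : 0 ≤ T) (hT1 : T ≤ 1) : T * T ≤ T := by
  set R := CFC.sqrt T
  have hR : IsSelfAdjoint R := (CFC.sqrt_nonneg T).isSelfAdjoint
  have key : T - T * T = R * (1 - T) * R := by
    rw [← CFC.sqrt_mul_sqrt_self T hT0]
    noncomm_ring
  exact sub_nonneg.1 (key ▸ hR.conjugate_nonneg (sub_nonneg.2 hT1))

lemma smul_sub_smul_mul_self_le_algebraMap {S : A} (hS : IsSelfAdjoint S) {a b : ℝ}
    (ha : 0 < a) (hb : 0 < b) :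
    (a + b) • S - (a * b) • (S * S) ≤ algebraMap ℝ A (((a + b) / (2 * √(a * b))) ^ 2) := by
  set s := √(a * b)
  set c := (a + b) / (2 * s)
  have hs : s * s = a * b := Real.mul_self_sqrt (by positivity)
  have hsc : 2 * (s * c) = a + b := by
    have : 0 < s := by positivity
    simp only [c]
    field_simp
  set Y := s • S - algebraMap ℝ A c
  have hY : IsSelfAdjoint Y := ((IsSelfAdjoint.all s).smul hS).sub (.algebraMap A (.all c))
  have key : algebraMap ℝ A (c ^ 2) - ((a + b) • S - (a * b) • (S * S)) = Y * Y := by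
    simp only [Y, Algebra.algebraMap_eq_smul_one, sub_mul, mul_sub, one_mul, mul_one,
      smul_mul_assoc, mul_smul_comm]
    rw [← hs, ← hsc]
    module
  exact sub_nonneg.1 (key ▸ hY.mul_self_nonneg)

lemma norm_mul_mul_le_of_mul_self_add_smul_mul_self_le {P N T : A} {a b : ℝ}
    (ha : 0 < a) (hb : 0 < b) (hP : IsSelfAdjoint P) (hN : IsSelfAdjoint N)
    (hT0 : 0 ≤ T) (hT1 : T ≤ 1)
    (hPN : P * P + (a * b) • (N * N) ≤ algebraMap ℝ A (a + b)) :
    ‖N * T * P‖ ≤ (a + b) / (2 * √(a * b)) := by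
  have hT : IsSelfAdjoint T := .of_nonneg hT0
  set S := N * T * N
  have hS : IsSelfAdjoint S := by simpa only [hN.star_eq] using hT.conjugate N
  have hPP : P * P ≤ algebraMap ℝ A (a + b) - (a * b) • (N * N) := le_sub_iff_add_le.2 hPN
  have hX : N * T * P * star (N * T * P) ≤ algebraMap ℝ A (((a + b) / (2 * √(a * b))) ^ 2) :=
    calc N * T * P * star (N * T * P) = star (T * N) * (P * P) * (T * N) := by
          simp only [star_mul, hP.star_eq, hT.star_eq, hN.star_eq, mul_assoc]
      _ ≤ star (T * N) * (algebraMap ℝ A (a + b) - (a * b) • (N * N)) * (T * N) :=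
          star_left_conjugate_le_conjugate hPP _
      _ = (a + b) • (N * (T * T) * N) - (a * b) • (S * S) := by
          simp only [S, star_mul, hT.star_eq, hN.star_eq, Algebra.algebraMap_eq_smul_one, mul_sub,
            sub_mul, mul_smul_comm, smul_mul_assoc, mul_one, mul_assoc]
      _ ≤ (a + b) • S - (a * b) • (S * S) := by
          gcongr
          exact hN.conjugate_le_conjugate (mul_self_le_self_of_nonneg_of_le_one_s18 hT0 hT1)
      _ ≤ _ := smul_sub_smul_mul_self_le_algebraMap hS ha hb
  rw [← CStarAlgebra.norm_le_iff_le_algebraMap _ (by positivity) (mul_star_self_nonneg _),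
    CStarRing.norm_self_mul_star, ← sq] at hX
  exact (sq_le_sq₀ (norm_nonneg _) (by positivity)).1 hX

lemma cfc_rpow_half_mul_self_add_smul_le {Z : A} {a b : ℝ} (hZ : IsSelfAdjoint Z)
    (hspec : spectrum ℝ Z ⊆ Icc b a) (hb : 0 < b) :
    cfc (fun x : ℝ => x ^ ((1 / 2) : ℝ)) Z * cfc (fun x : ℝ => x ^ ((1 / 2) : ℝ)) Z +
        (a * b) • (cfc (fun x : ℝ => x ^ (-(1 / 2) : ℝ)) Z *
          cfc (fun x : ℝ => x ^ (-(1 / 2) : ℝ)) Z) ≤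
      algebraMap ℝ A (a + b) := by
  have hpos : ∀ x ∈ spectrum ℝ Z, 0 < x := fun x hx => hb.trans_le (hspec hx).1
  -- discharges the continuity side goals of the `cfc` rewrites for negative exponents
  have hne : ∀ x ∈ spectrum ℝ Z, x ≠ 0 := fun x hx => (hpos x hx).ne'
  rw [← cfc_mul .., ← cfc_mul .., ← cfc_smul .., ← cfc_add ..]
  refine cfc_le_algebraMap _ _ Z fun x hx => ?_
  calc x ^ (1 / 2 : ℝ) * x ^ (1 / 2 : ℝ) + (a * b) • (x ^ (-(1 / 2) : ℝ) * x ^ (-(1 / 2) : ℝ))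
      = x + a * b * x⁻¹ := by
        rw [← Real.rpow_add (hpos x hx), ← Real.rpow_add (hpos x hx), smul_eq_mul]
        norm_num [Real.rpow_neg_one]
    _ ≤ a + b := add_mul_inv_le_add_of_mem_Icc hb (hspec hx)

theorem norm_cfc_rpow_neg_half_mul_mul_cfc_rpow_half_le {Z T : A} {a b : ℝ}
    (hZ : IsSelfAdjoint Z) (hspec : spectrum ℝ Z ⊆ Icc b a) (hb : 0 < b) (hba : b ≤ a)
    (hT0 : 0 ≤ T) (hT1 : T ≤ 1) :
    ‖cfc (fun x : ℝ => x ^ (-(1 / 2) : ℝ)) Z * T * cfc (fun x : ℝ => x ^ ((1 / 2) : ℝ)) Z‖ ≤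
      (a + b) / (2 * √(a * b)) :=
  norm_mul_mul_le_of_mul_self_add_smul_mul_self_le (hb.trans_le hba) hb (cfc_predicate _ _)
    (cfc_predicate _ _) hT0 hT1 (cfc_rpow_half_mul_self_add_smul_le hZ hspec hb)

end CStarAlgebra

theorem stmt_18_general (n : ℕ) (A Z : Matrix (Fin n) (Fin n) ℂ)
    (hA0 : A.PosSemidef) (hA1 : (1 - A).PosSemidef) (hZ : Z.PosDef) (a b : ℝ)
    (ha : ∀ i, hZ.1.eigenvalues i ≤ a)
    (hb : ∀ i, b ≤ hZ.1.eigenvalues i) (hb' : ∃ i, hZ.1.eigenvalues i = b) :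
    ‖Matrix.toEuclideanCLM (𝕜 := ℂ)
        (hZ.1.cfc (fun x : ℝ => x ^ (-(1 / 2) : ℝ)) * A *
          hZ.1.cfc (fun x : ℝ => x ^ ((1 / 2) : ℝ)))‖ ≤
      (a + b) / (2 * Real.sqrt (a * b)) := by
  obtain ⟨i, rfl⟩ := hb'
  have hspec : spectrum ℝ Z ⊆ Icc (hZ.1.eigenvalues i) a := by
    rw [hZ.1.spectrum_real_eq_range_eigenvalues]
    rintro _ ⟨j, rfl⟩
    exact ⟨hb j, ha j⟩
  rw [← hZ.1.cfc_eq, ← hZ.1.cfc_eq]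
  -- the C⋆-norm of a matrix is `‖toEuclideanCLM M‖` by definition
  open scoped Matrix.Norms.L2Operator MatrixOrder in
  exact norm_cfc_rpow_neg_half_mul_mul_cfc_rpow_half_le hZ.1.isSelfAdjoint hspec
    (hZ.eigenvalues_pos i) (ha i) hA0.nonneg (Matrix.le_iff.2 hA1)

theorem stmt_18 (n : ℕ) (A Z : Matrix (Fin n) (Fin n) ℂ)
    (hA0 : A.PosSemidef) (hA1 : (1 - A).PosSemidef) (hZ : Z.PosDef) (a b : ℝ)
    (ha : ∀ i, hZ.1.eigenvalues i ≤ a) (ha' : ∃ i, hZ.1.eigenvalues i = a)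
    (hb : ∀ i, b ≤ hZ.1.eigenvalues i) (hb' : ∃ i, hZ.1.eigenvalues i = b) :
    ‖Matrix.toEuclideanCLM (𝕜 := ℂ)
        (hZ.1.cfc (fun x : ℝ => x ^ (-(1 / 2) : ℝ)) * A *
          hZ.1.cfc (fun x : ℝ => x ^ ((1 / 2) : ℝ)))‖ ≤
      (a + b) / (2 * Real.sqrt (a * b)) :=
  stmt_18_general n A Z hA0 hA1 hZ a b ha hb hb'
end
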